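/- arXiv:1310.8060 — 8 statements merged into one kernel-verified Lean document; each statement's English description precedes it below -/
import Mathlib

section
/- Let α be an alternating p-form on Q with 2 ≤ p ≤ q. Then Σ_{i,j,k,l=1}^q ⟨A_{e_i}e_j, A_{e_k}e_l⟩_L · ⟨(e_j∧e_i)⌟α, (e_l∧e_k)⌟α⟩ = Σ_{s=1}^r |(Σ_{i=1}^q A_{e_i}V_s ∧ e_i)⌟α|². -/
open scoped BigOperators RealInnerProductSpace

variable {Q : Type*} [NormedAddCommGroup Q] [InnerProductSpace ℝ Q]

/-- Inner product of two `p`-forms with respect to an orthonormal frame `e`: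
`⟨α,β⟩ = (1/p!) ∑_{i₁,…,i_p} α(e_{i₁},…,e_{i_p}) β(e_{i₁},…,e_{i_p})`. -/
noncomputable def formInner {q p : ℕ} (e : Fin q → Q)
    (α β : AlternatingMap ℝ Q ℝ (Fin p)) : ℝ :=
  (1 / (Nat.factorial p : ℝ)) * ∑ f : Fin p → Fin q, α (e ∘ f) * β (e ∘ f)

/-- Interior product `X ⌟ α` of a vector with a `p`-form (zero when `p = 0`).
The interior product with a decomposable `2`-vector is then `(X∧Y)⌟α = X⌟(Y⌟α)`,
i.e. `((X∧Y)⌟α)(Z₁,…) = α(Y,X,Z₁,…)`. -/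
noncomputable def iprod : ∀ {p : ℕ}, Q → AlternatingMap ℝ Q ℝ (Fin p) →
    AlternatingMap ℝ Q ℝ (Fin (p - 1))
  | 0, _, _ => 0
  | _ + 1, X, α => α.curryLeft X

/-!
Both sides are the same quadratic expression in the `(p-2)`-forms `(e_j ∧ e_i) ⌟ α`: expanding
`⟨A_{e_i}e_j, A_{e_k}e_l⟩` in the orthonormal basis `V` of `L` (Parseval) turns the left side into
`∑_s ∑_{i,j,k,l} c^s_{ij} c^s_{kl} ⟨(e_j∧e_i)⌟α, (e_l∧e_k)⌟α⟩` with `c^s_{ij} = ⟨A_{e_i}e_j, V_s⟩`,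
and this is the right side once `⟨·,·⟩` and the interior product are expanded bilinearly.
-/

noncomputable def formInnerBilin {q p : ℕ} (e : Fin q → Q) :
    AlternatingMap ℝ Q ℝ (Fin p) →ₗ[ℝ] AlternatingMap ℝ Q ℝ (Fin p) →ₗ[ℝ] ℝ :=
  LinearMap.mk₂ ℝ (formInner e)
    (fun α α' β => by
      simp only [formInner, AlternatingMap.add_apply, add_mul, Finset.sum_add_distrib, mul_add])
    (fun c α β => by
      simp only [formInner, AlternatingMap.smul_apply, smul_eq_mul, Finset.mul_sum]
      exact Finset.sum_congr rfl fun _ _ => by ring)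
    (fun α β β' => by
      simp only [formInner, AlternatingMap.add_apply, mul_add, Finset.sum_add_distrib])
    (fun c α β => by
      simp only [formInner, AlternatingMap.smul_apply, smul_eq_mul, Finset.mul_sum]
      exact Finset.sum_congr rfl fun _ _ => by ring)

theorem formInnerBilin_apply {q p : ℕ} (e : Fin q → Q) (α β : AlternatingMap ℝ Q ℝ (Fin p)) :
    formInnerBilin e α β = formInner e α β :=
  rfl

theorem iprod_sum_smul {p : ℕ} {ι : Type*} (s : Finset ι) (c : ι → ℝ) (v : ι → Q)
    (β : AlternatingMap ℝ Q ℝ (Fin p)) :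
    iprod (∑ j ∈ s, c j • v j) β = ∑ j ∈ s, c j • iprod (v j) β := by
  cases p with
  | zero => simp [iprod]
  | succ n => simp [iprod, map_sum, map_smul]

theorem OrthonormalBasis.sum_inner_mul_bilin_eq_sum_bilin {M L ι : Type*} [AddCommGroup M] [Module ℝ M]
    [NormedAddCommGroup L] [InnerProductSpace ℝ L] [Fintype ι] {r : ℕ}
    (V : OrthonormalBasis (Fin r) ℝ L) (B : M →ₗ[ℝ] M →ₗ[ℝ] ℝ) (u : ι → L) (x : ι → M) :
    ∑ a, ∑ b, ⟪u a, u b⟫ * B (x a) (x b)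
      = ∑ s, B (∑ a, ⟪u a, V s⟫ • x a) (∑ b, ⟪u b, V s⟫ • x b) := by
  have parseval : ∀ a b, ⟪u a, u b⟫ = ∑ s, ⟪u a, V s⟫ * ⟪u b, V s⟫ := fun a b => by
    simp only [← V.sum_inner_mul_inner (u a) (u b), real_inner_comm (u b)]
  have expand : ∀ s, B (∑ a, ⟪u a, V s⟫ • x a) (∑ b, ⟪u b, V s⟫ • x b)
      = ∑ a, ∑ b, ⟪u a, V s⟫ * ⟪u b, V s⟫ * B (x a) (x b) := fun s => by
    simp only [map_sum, map_smul, LinearMap.sum_apply, LinearMap.smul_apply, smul_eq_mul,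
      Finset.mul_sum]
    rw [Finset.sum_comm]
    exact Finset.sum_congr rfl fun a _ => Finset.sum_congr rfl fun b _ => by ring
  simp only [parseval, expand, Finset.sum_mul]
  exact (Finset.sum_congr rfl fun a _ => Finset.sum_comm).trans Finset.sum_comm

theorem stmt3_general {q r p : ℕ}
    (e : OrthonormalBasis (Fin q) ℝ Q)
    {L : Type*} [NormedAddCommGroup L] [InnerProductSpace ℝ L]
    (V : OrthonormalBasis (Fin r) ℝ L)
    (A : Q →ₗ[ℝ] Q →ₗ[ℝ] L)
    (α : AlternatingMap ℝ Q ℝ (Fin p)) :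
    ∑ i : Fin q, ∑ j : Fin q, ∑ k : Fin q, ∑ l : Fin q,
        ⟪A (e i) (e j), A (e k) (e l)⟫ *
          formInner ⇑e (iprod (e j) (iprod (e i) α)) (iprod (e l) (iprod (e k) α))
      = ∑ s : Fin r,
          formInner ⇑e
            (∑ i : Fin q, iprod (∑ j : Fin q, ⟪A (e i) (e j), V s⟫ • e j) (iprod (e i) α))
            (∑ i : Fin q, iprod (∑ j : Fin q, ⟪A (e i) (e j), V s⟫ • e j) (iprod (e i) α)) := by
  have h := V.sum_inner_mul_bilin_eq_sum_bilin (formInnerBilin ⇑e)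
    (fun ij : Fin q × Fin q => A (e ij.1) (e ij.2))
    (fun ij => iprod (e ij.2) (iprod (e ij.1) α))
  simp only [formInnerBilin_apply, Fintype.sum_prod_type] at h
  simp only [iprod_sum_smul]
  exact h

/-- For a `p`-form `α` with `2 ≤ p ≤ q` and a skew-symmetric bilinear map `A : Q × Q → L`
(the O'Neill tensor), writing `A_{e_i}V_s = ∑_j ⟨A_{e_i}e_j, V_s⟩ e_j`,
`∑_{i,j,k,l} ⟨A_{e_i}e_j, A_{e_k}e_l⟩·⟨(e_j∧e_i)⌟α, (e_l∧e_k)⌟α⟩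
  = ∑_s |(∑_i A_{e_i}V_s ∧ e_i)⌟α|²`. -/
theorem stmt3 {q r p : ℕ} (hp2 : 2 ≤ p) (hpq : p ≤ q)
    (e : OrthonormalBasis (Fin q) ℝ Q)
    {L : Type*} [NormedAddCommGroup L] [InnerProductSpace ℝ L]
    (V : OrthonormalBasis (Fin r) ℝ L)
    (A : Q →ₗ[ℝ] Q →ₗ[ℝ] L) (hA : ∀ X Y : Q, A X Y = - A Y X)
    (α : AlternatingMap ℝ Q ℝ (Fin p)) :
    ∑ i : Fin q, ∑ j : Fin q, ∑ k : Fin q, ∑ l : Fin q,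
        ⟪A (e i) (e j), A (e k) (e l)⟫ *
          formInner ⇑e (iprod (e j) (iprod (e i) α)) (iprod (e l) (iprod (e k) α))
      = ∑ s : Fin r,
          formInner ⇑e
            (∑ i : Fin q, iprod (∑ j : Fin q, ⟪A (e i) (e j), V s⟫ • e j) (iprod (e i) α))
            (∑ i : Fin q, iprod (∑ j : Fin q, ⟪A (e i) (e j), V s⟫ • e j) (iprod (e i) α)) :=
  stmt3_general e V A α
end

section
/- Let α be an alternating p-form on Q with 2 ≤ p ≤ q, and write α_{j_1…j_p} := α(e_{j_1},…,e_{j_p}). For indices k, l, i_1,…,i_{p−2} ∈ {1,…,q} set (B⁻α)_{k,l,i_1…i_{p−2}} := Σ_{i=1}^q ( α_{i i_1 … i_{p−2} k}·A_{e_i}e_l − α_{i i_1 … i_{p−2} l}·A_{e_i}e_k ) ∈ L, and define |B⁻α|² := (1/(p−2)!)·Σ_{k,l,i_1,…,i_{p−2}=1}^q |(B⁻α)_{k,l,i_1…i_{p−2}}|_L². Then (1/2)·|B⁻α|² = (p−1)·Σ_{i,j,l=1}^q ⟨e_i⌟α, e_j⌟α⟩·⟨A_{e_i}e_l, A_{e_j}e_l⟩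 − Σ_{i,j,k,l=1}^q ⟨(e_j∧e_i)⌟α, (e_l∧e_k)⌟α⟩·⟨A_{e_i}e_l, A_{e_k}e_j⟩. -/
open scoped BigOperators RealInnerProductSpace

variable {Q : Type*} [NormedAddCommGroup Q] [InnerProductSpace ℝ Q]

lemma aux_cons_cons_swap {m : ℕ} (β : AlternatingMap ℝ Q ℝ (Fin (m+2))) (x y : Q) (v : Fin m → Q) :
    β (Fin.cons x (Fin.cons y v)) = - β (Fin.cons y (Fin.cons x v)) := by
  have h := β.map_swap (Fin.cons y (Fin.cons x v)) (i := (0 : Fin (m+2))) (j := 1)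
    (by simp [Fin.ext_iff])
  rw [← h]
  congr 1
  funext t
  refine Fin.cases ?_ (fun s => ?_) t
  · rw [Function.comp_apply, Equiv.swap_apply_left, Fin.cons_zero, ← Fin.succ_zero_eq_one,
      Fin.cons_succ, Fin.cons_zero]
  · refine Fin.cases ?_ (fun u => ?_) s
    · rw [Function.comp_apply]
      have hs : Equiv.swap (0:Fin (m+2)) 1 (Fin.succ 0) = 0 := by
        rw [Fin.succ_zero_eq_one]; exact Equiv.swap_apply_right _ _
      rw [hs, Fin.cons_zero, Fin.cons_succ, Fin.cons_zero]
    · have h1 : (u.succ.succ : Fin (m+2)) ≠ 0 := Fin.succ_ne_zero _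
      have h2 : (u.succ.succ : Fin (m+2)) ≠ 1 := by
        rw [← Fin.succ_zero_eq_one]
        exact fun h => Fin.succ_ne_zero u (Fin.succ_injective _ h)
      rw [Function.comp_apply, Equiv.swap_apply_of_ne_of_ne h1 h2,
        Fin.cons_succ, Fin.cons_succ, Fin.cons_succ, Fin.cons_succ]

lemma aux_snoc_pow : ∀ {m : ℕ} (β : AlternatingMap ℝ Q ℝ (Fin (m+1))) (v : Fin m → Q) (y : Q),
    β (Fin.snoc v y) = (-1 : ℝ)^m * β (Fin.cons y v)
  | 0, β, v, y => by
    rw [pow_zero, one_mul]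
    congr 1
    funext t
    fin_cases t
    simp [Fin.snoc]
  | (m+1), β, v, y => by
    have hv : v = Fin.cons (v 0) (Fin.tail v) := (Fin.cons_self_tail v).symm
    rw [hv, ← Fin.cons_snoc_eq_snoc_cons]
    have h1 : β (Fin.cons (v 0) (Fin.snoc (Fin.tail v) y)) =
        (β.curryLeft (v 0)) (Fin.snoc (Fin.tail v) y) := rfl
    rw [h1, aux_snoc_pow (β.curryLeft (v 0)) (Fin.tail v) y]
    have h2 : (β.curryLeft (v 0)) (Fin.cons y (Fin.tail v)) =
        β (Fin.cons (v 0) (Fin.cons y (Fin.tail v))) := rfl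
    rw [h2, aux_cons_cons_swap]
    ring

lemma aux_flattenA {M : Type*} [AddCommMonoid M] {ι κ : Type*} [Fintype ι] [Fintype κ]
    (F : ι → ι → κ → ι → ι → M) :
    ∑ k : ι, ∑ l : ι, ∑ g : κ, ∑ i : ι, ∑ j : ι, F k l g i j
      = ∑ p : ι × ι × κ × ι × ι, F p.1 p.2.1 p.2.2.1 p.2.2.2.1 p.2.2.2.2 := by
  symm; simp [Fintype.sum_prod_type]

lemma aux_flattenB {M : Type*} [AddCommMonoid M] {ι κ : Type*} [Fintype ι] [Fintype κ]
    (F : ι → ι → ι → ι → κ → M) :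
    ∑ i : ι, ∑ j : ι, ∑ k : ι, ∑ l : ι, ∑ g : κ, F i j k l g
      = ∑ p : ι × ι × ι × ι × κ, F p.1 p.2.1 p.2.2.1 p.2.2.2.1 p.2.2.2.2 := by
  symm; simp [Fintype.sum_prod_type]

/-- swap first two components -/
def auxEquivKL {ι κ : Type*} : ι × ι × κ × ι × ι ≃ ι × ι × κ × ι × ι where
  toFun p := (p.2.1, p.1, p.2.2)
  invFun p := (p.2.1, p.1, p.2.2)
  left_inv p := rfl
  right_inv p := rfl

/-- swap last two components -/
def auxEquivIJ {ι κ : Type*} : ι × ι × κ × ι × ι ≃ ι × ι × κ × ι × ι where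
  toFun p := (p.1, p.2.1, p.2.2.1, p.2.2.2.2, p.2.2.2.1)
  invFun p := (p.1, p.2.1, p.2.2.1, p.2.2.2.2, p.2.2.2.1)
  left_inv p := rfl
  right_inv p := rfl

/-- (i,j,l,k,g) ↦ (k,l,g,i,j) -/
def auxEquiv3 {ι κ : Type*} : ι × ι × ι × ι × κ ≃ ι × ι × κ × ι × ι where
  toFun p := (p.2.2.2.1, p.2.2.1, p.2.2.2.2, p.1, p.2.1)
  invFun p := (p.2.2.2.1, p.2.2.2.2, p.2.1, p.1, p.2.2.1)
  left_inv p := rfl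
  right_inv p := rfl

/-- (i,j,k,l,g) ↦ (j,l,g,i,k) -/
def auxEquiv4 {ι κ : Type*} : ι × ι × ι × ι × κ ≃ ι × ι × κ × ι × ι where
  toFun p := (p.2.1, p.2.2.2.1, p.2.2.2.2, p.1, p.2.2.1)
  invFun p := (p.2.2.2.1, p.1, p.2.2.2.2, p.2.1, p.2.2.1)
  left_inv p := rfl
  right_inv p := rfl

lemma aux_flatten2 {M : Type*} [AddCommMonoid M] {ι κ : Type*} [Fintype ι] [Fintype κ]
    (F : ι → κ → M) :
    ∑ k : ι, ∑ g : κ, F k g = ∑ p : ι × κ, F p.1 p.2 := by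
  symm; simp [Fintype.sum_prod_type]

def auxConsEquiv {κ : Type*} (n : ℕ) : (Fin (n+1) → κ) ≃ κ × (Fin n → κ) where
  toFun f := (f 0, Fin.tail f)
  invFun p := Fin.cons p.1 p.2
  left_inv f := Fin.cons_self_tail f
  right_inv p := by simp [Fin.tail_cons]

/-- For a `p`-form `α` with `2 ≤ p ≤ q` (here `p = n+2`) and the O'Neill tensor `A`, define
`(B⁻α)_{k,l,i₁…i_{p−2}} = ∑_i (α_{i i₁…i_{p−2} k}·A_{e_i}e_l − α_{i i₁…i_{p−2} l}·A_{e_i}e_k)` and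
`|B⁻α|² = (1/(p−2)!)·∑_{k,l,i₁,…,i_{p−2}} |(B⁻α)_{k,l,i₁…i_{p−2}}|²`. Then
`(1/2)|B⁻α|² = (p−1)·∑_{i,j,l}⟨e_i⌟α,e_j⌟α⟩⟨A_{e_i}e_l,A_{e_j}e_l⟩
  − ∑_{i,j,k,l}⟨(e_j∧e_i)⌟α,(e_l∧e_k)⌟α⟩⟨A_{e_i}e_l,A_{e_k}e_j⟩`. -/
theorem stmt6 {q r n : ℕ} (hpq : n + 2 ≤ q)
    (e : OrthonormalBasis (Fin q) ℝ Q)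
    {L : Type*} [NormedAddCommGroup L] [InnerProductSpace ℝ L]
    (V : OrthonormalBasis (Fin r) ℝ L)
    (A : Q →ₗ[ℝ] Q →ₗ[ℝ] L) (hA : ∀ X Y : Q, A X Y = - A Y X)
    (α : AlternatingMap ℝ Q ℝ (Fin (n + 2))) :
    (1 / 2 : ℝ) * ((1 / (Nat.factorial n : ℝ)) *
        ∑ k : Fin q, ∑ l : Fin q, ∑ g : Fin n → Fin q,
          ‖∑ i : Fin q,
              (α (Fin.cons (e i) (Fin.snoc (⇑e ∘ g) (e k))) • A (e i) (e l)
                - α (Fin.cons (e i) (Fin.snoc (⇑e ∘ g) (e l))) • A (e i) (e k))‖ ^ 2)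
      = ((n : ℝ) + 1) *
          (∑ i : Fin q, ∑ j : Fin q, ∑ l : Fin q,
            formInner ⇑e (iprod (e i) α) (iprod (e j) α) * ⟪A (e i) (e l), A (e j) (e l)⟫)
        - ∑ i : Fin q, ∑ j : Fin q, ∑ k : Fin q, ∑ l : Fin q,
            formInner ⇑e (iprod (e j) (iprod (e i) α)) (iprod (e l) (iprod (e k) α)) *
              ⟪A (e i) (e l), A (e k) (e j)⟫ := by
  classical
  -- T i k g = α(e_i, e_k, e∘g)
  set T : Fin q → Fin q → (Fin n → Fin q) → ℝ :=
    fun i k g => α (Fin.cons (e i) (Fin.cons (e k) (⇑e ∘ g))) with hTdef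
  -- the canonical flattened sums
  set X1 : ℝ := ∑ p : Fin q × Fin q × (Fin n → Fin q) × Fin q × Fin q,
      T p.2.2.2.1 p.1 p.2.2.1 * T p.2.2.2.2 p.1 p.2.2.1 *
        ⟪A (e p.2.2.2.1) (e p.2.1), A (e p.2.2.2.2) (e p.2.1)⟫ with hX1def
  set X3 : ℝ := ∑ p : Fin q × Fin q × (Fin n → Fin q) × Fin q × Fin q,
      T p.2.2.2.1 p.1 p.2.2.1 * T p.2.2.2.2 p.2.1 p.2.2.1 *
        ⟪A (e p.2.2.2.1) (e p.2.1), A (e p.2.2.2.2) (e p.1)⟫ with hX3def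
  -- key : snoc in terms of T
  have key : ∀ (i k : Fin q) (g : Fin n → Fin q),
      α (Fin.cons (e i) (Fin.snoc (⇑e ∘ g) (e k))) = (-1:ℝ)^n * T i k g := by
    intro i k g
    have h1 : α (Fin.cons (e i) (Fin.snoc (⇑e ∘ g) (e k))) =
        (α.curryLeft (e i)) (Fin.snoc (⇑e ∘ g) (e k)) := rfl
    rw [h1, aux_snoc_pow (α.curryLeft (e i)) (⇑e ∘ g) (e k)]
    rfl
  -- norm-square expansion of a sum
  have hnormsq : ∀ (x : Fin q → L), ‖∑ i, x i‖^2 = ∑ i, ∑ j, (⟪x i, x j⟫ : ℝ) := by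
    intro x
    rw [← real_inner_self_eq_norm_sq, sum_inner]
    exact Finset.sum_congr rfl fun i _ => inner_sum _ _ _
  have hc : ((-1:ℝ)^n) * ((-1:ℝ)^n) = 1 := by
    rw [← pow_add]
    exact Even.neg_one_pow ⟨n, rfl⟩
  -- expansion per (k,l,g)
  have hsummand : ∀ (k l : Fin q) (g : Fin n → Fin q),
      ‖∑ i : Fin q, (α (Fin.cons (e i) (Fin.snoc (⇑e ∘ g) (e k))) • A (e i) (e l)
          - α (Fin.cons (e i) (Fin.snoc (⇑e ∘ g) (e l))) • A (e i) (e k))‖ ^ 2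
      = ∑ i : Fin q, ∑ j : Fin q,
          (T i k g * T j k g * ⟪A (e i) (e l), A (e j) (e l)⟫
          + T i l g * T j l g * ⟪A (e i) (e k), A (e j) (e k)⟫
          - T i k g * T j l g * ⟪A (e i) (e l), A (e j) (e k)⟫
          - T i l g * T j k g * ⟪A (e i) (e k), A (e j) (e l)⟫) := by
    intro k l g
    have hx : ∀ i : Fin q,
        (α (Fin.cons (e i) (Fin.snoc (⇑e ∘ g) (e k))) • A (e i) (e l)
          - α (Fin.cons (e i) (Fin.snoc (⇑e ∘ g) (e l))) • A (e i) (e k))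
        = ((-1:ℝ)^n) • (T i k g • A (e i) (e l) - T i l g • A (e i) (e k)) := by
      intro i
      rw [key i k g, key i l g, mul_smul, mul_smul, smul_sub]
    rw [Finset.sum_congr rfl (fun i _ => hx i), ← Finset.smul_sum, norm_smul, mul_pow, hnormsq]
    have habs : ‖(-1:ℝ)^n‖^2 = 1 := by
      rw [norm_pow, norm_neg, norm_one, one_pow, one_pow]
    rw [habs, one_mul]
    refine Finset.sum_congr rfl fun i _ => Finset.sum_congr rfl fun j _ => ?_
    rw [inner_sub_left, inner_sub_right, inner_sub_right, real_inner_smul_left,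
      real_inner_smul_left, real_inner_smul_left, real_inner_smul_left,
      real_inner_smul_right, real_inner_smul_right, real_inner_smul_right,
      real_inner_smul_right]
    ring
  -- LHS main sum equals 2*X1 - 2*X3
  have hL : (∑ k : Fin q, ∑ l : Fin q, ∑ g : Fin n → Fin q,
      ‖∑ i : Fin q, (α (Fin.cons (e i) (Fin.snoc (⇑e ∘ g) (e k))) • A (e i) (e l)
          - α (Fin.cons (e i) (Fin.snoc (⇑e ∘ g) (e l))) • A (e i) (e k))‖ ^ 2)
      = 2*X1 - 2*X3 := by
    have step1 : (∑ k : Fin q, ∑ l : Fin q, ∑ g : Fin n → Fin q,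
        ‖∑ i : Fin q, (α (Fin.cons (e i) (Fin.snoc (⇑e ∘ g) (e k))) • A (e i) (e l)
            - α (Fin.cons (e i) (Fin.snoc (⇑e ∘ g) (e l))) • A (e i) (e k))‖ ^ 2)
        = ∑ k : Fin q, ∑ l : Fin q, ∑ g : Fin n → Fin q, ∑ i : Fin q, ∑ j : Fin q,
          (T i k g * T j k g * ⟪A (e i) (e l), A (e j) (e l)⟫
          + T i l g * T j l g * ⟪A (e i) (e k), A (e j) (e k)⟫
          - T i k g * T j l g * ⟪A (e i) (e l), A (e j) (e k)⟫
          - T i l g * T j k g * ⟪A (e i) (e k), A (e j) (e l)⟫) := by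
      refine Finset.sum_congr rfl fun k _ => Finset.sum_congr rfl fun l _ =>
        Finset.sum_congr rfl fun g _ => hsummand k l g
    rw [step1, aux_flattenA]
    simp only [Finset.sum_add_distrib, Finset.sum_sub_distrib]
    have h2 : (∑ p : Fin q × Fin q × (Fin n → Fin q) × Fin q × Fin q,
        T p.2.2.2.1 p.2.1 p.2.2.1 * T p.2.2.2.2 p.2.1 p.2.2.1 *
          ⟪A (e p.2.2.2.1) (e p.1), A (e p.2.2.2.2) (e p.1)⟫) = X1 := by
      rw [hX1def]
      exact Fintype.sum_equiv auxEquivKL _ _ (fun p => rfl)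
    have h4 : (∑ p : Fin q × Fin q × (Fin n → Fin q) × Fin q × Fin q,
        T p.2.2.2.1 p.2.1 p.2.2.1 * T p.2.2.2.2 p.1 p.2.2.1 *
          ⟪A (e p.2.2.2.1) (e p.1), A (e p.2.2.2.2) (e p.2.1)⟫) = X3 := by
      rw [hX3def]
      refine Fintype.sum_equiv auxEquivIJ _ _ (fun p => ?_)
      show T p.2.2.2.1 p.2.1 p.2.2.1 * T p.2.2.2.2 p.1 p.2.2.1 *
          ⟪A (e p.2.2.2.1) (e p.1), A (e p.2.2.2.2) (e p.2.1)⟫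
        = T p.2.2.2.2 p.1 p.2.2.1 * T p.2.2.2.1 p.2.1 p.2.2.1 *
          ⟪A (e p.2.2.2.2) (e p.2.1), A (e p.2.2.2.1) (e p.1)⟫
      rw [real_inner_comm]; ring
    rw [h2, h4, hX1def, hX3def]
    ring
  -- RHS first sum
  have hform1 : ∀ i j : Fin q, formInner ⇑e (iprod (e i) α) (iprod (e j) α)
      = (1 / (Nat.factorial (n+1) : ℝ)) * ∑ k : Fin q, ∑ g : Fin n → Fin q,
          T i k g * T j k g := by
    intro i j
    have h0 : formInner ⇑e (iprod (e i) α) (iprod (e j) α)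
        = (1 / (Nat.factorial (n+1) : ℝ)) * ∑ f : Fin (n+1) → Fin q,
            α (Fin.cons (e i) (⇑e ∘ f)) * α (Fin.cons (e j) (⇑e ∘ f)) := rfl
    rw [h0]
    congr 1
    rw [aux_flatten2 (fun k g => T i k g * T j k g)]
    refine Fintype.sum_equiv (auxConsEquiv n) _ _ (fun f => ?_)
    have hcomp : ⇑e ∘ f = Fin.cons (e (f 0)) (⇑e ∘ Fin.tail f) := by
      funext t
      exact Fin.cases rfl (fun s => rfl) t
    show α (Fin.cons (e i) (⇑e ∘ f)) * α (Fin.cons (e j) (⇑e ∘ f))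
      = T i (f 0) (Fin.tail f) * T j (f 0) (Fin.tail f)
    rw [hcomp]
  have hR1 : (∑ i : Fin q, ∑ j : Fin q, ∑ l : Fin q,
      formInner ⇑e (iprod (e i) α) (iprod (e j) α) * ⟪A (e i) (e l), A (e j) (e l)⟫)
      = (1 / (Nat.factorial (n+1) : ℝ)) * X1 := by
    have step : (∑ i : Fin q, ∑ j : Fin q, ∑ l : Fin q,
        formInner ⇑e (iprod (e i) α) (iprod (e j) α) * ⟪A (e i) (e l), A (e j) (e l)⟫)
        = (1 / (Nat.factorial (n+1) : ℝ)) * ∑ i : Fin q, ∑ j : Fin q, ∑ l : Fin q,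
            ∑ k : Fin q, ∑ g : Fin n → Fin q,
              T i k g * T j k g * ⟪A (e i) (e l), A (e j) (e l)⟫ := by
      rw [Finset.mul_sum]
      refine Finset.sum_congr rfl fun i _ => ?_
      rw [Finset.mul_sum]
      refine Finset.sum_congr rfl fun j _ => ?_
      rw [Finset.mul_sum]
      refine Finset.sum_congr rfl fun l _ => ?_
      rw [hform1 i j, mul_assoc]
      congr 1
      rw [Finset.sum_mul]
      exact Finset.sum_congr rfl fun k _ => Finset.sum_mul _ _ _
    rw [step]
    congr 1
    -- flatten (i,j,l,k,g) and reindex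
    rw [show (∑ i : Fin q, ∑ j : Fin q, ∑ l : Fin q, ∑ k : Fin q, ∑ g : Fin n → Fin q,
        T i k g * T j k g * ⟪A (e i) (e l), A (e j) (e l)⟫)
      = ∑ p : Fin q × Fin q × Fin q × Fin q × (Fin n → Fin q),
          T p.1 p.2.2.2.1 p.2.2.2.2 * T p.2.1 p.2.2.2.1 p.2.2.2.2 *
            ⟪A (e p.1) (e p.2.2.1), A (e p.2.1) (e p.2.2.1)⟫
      from aux_flattenB _, hX1def]
    exact Fintype.sum_equiv auxEquiv3 _ _ (fun p => rfl)
  -- RHS second sum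
  have hform2 : ∀ i j k l : Fin q,
      formInner ⇑e (iprod (e j) (iprod (e i) α)) (iprod (e l) (iprod (e k) α))
      = (1 / (Nat.factorial n : ℝ)) * ∑ g : Fin n → Fin q, T i j g * T k l g :=
    fun _ _ _ _ => rfl
  have hR2 : (∑ i : Fin q, ∑ j : Fin q, ∑ k : Fin q, ∑ l : Fin q,
      formInner ⇑e (iprod (e j) (iprod (e i) α)) (iprod (e l) (iprod (e k) α)) *
        ⟪A (e i) (e l), A (e k) (e j)⟫)
      = (1 / (Nat.factorial n : ℝ)) * X3 := by
    have step : (∑ i : Fin q, ∑ j : Fin q, ∑ k : Fin q, ∑ l : Fin q,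
        formInner ⇑e (iprod (e j) (iprod (e i) α)) (iprod (e l) (iprod (e k) α)) *
          ⟪A (e i) (e l), A (e k) (e j)⟫)
        = (1 / (Nat.factorial n : ℝ)) * ∑ i : Fin q, ∑ j : Fin q, ∑ k : Fin q, ∑ l : Fin q,
            ∑ g : Fin n → Fin q, T i j g * T k l g * ⟪A (e i) (e l), A (e k) (e j)⟫ := by
      rw [Finset.mul_sum]
      refine Finset.sum_congr rfl fun i _ => ?_
      rw [Finset.mul_sum]
      refine Finset.sum_congr rfl fun j _ => ?_
      rw [Finset.mul_sum]
      refine Finset.sum_congr rfl fun k _ => ?_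
      rw [Finset.mul_sum]
      refine Finset.sum_congr rfl fun l _ => ?_
      rw [hform2 i j k l, mul_assoc]
      congr 1
      exact Finset.sum_mul _ _ _
    rw [step]
    congr 1
    rw [show (∑ i : Fin q, ∑ j : Fin q, ∑ k : Fin q, ∑ l : Fin q, ∑ g : Fin n → Fin q,
        T i j g * T k l g * ⟪A (e i) (e l), A (e k) (e j)⟫)
      = ∑ p : Fin q × Fin q × Fin q × Fin q × (Fin n → Fin q),
          T p.1 p.2.1 p.2.2.2.2 * T p.2.2.1 p.2.2.2.1 p.2.2.2.2 *
            ⟪A (e p.1) (e p.2.2.2.1), A (e p.2.2.1) (e p.2.1)⟫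
      from aux_flattenB _, hX3def]
    exact Fintype.sum_equiv auxEquiv4 _ _ (fun p => rfl)
  rw [hL, hR1, hR2]
  have hfac : ((Nat.factorial (n+1) : ℕ) : ℝ) = ((n:ℝ)+1) * (Nat.factorial n : ℝ) := by
    rw [Nat.factorial_succ]; push_cast; ring
  have hne : ((Nat.factorial n : ℕ) : ℝ) ≠ 0 := Nat.cast_ne_zero.mpr (Nat.factorial_ne_zero n)
  have hne1 : ((Nat.factorial (n+1) : ℕ) : ℝ) ≠ 0 := Nat.cast_ne_zero.mpr (Nat.factorial_ne_zero _)
  field_simp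
  rw [hfac]
  ring
end

section
/- Let (R_{ijkl})_{1≤i,j,k,l≤q} be real numbers with R_{ijkl} = −R_{jikl} = −R_{ijlk} = R_{klij}, and let ρ₁ ∈ ℝ be such that the symmetric bilinear form ρ on Λ²Q determined by ρ(e_i∧e_j, e_k∧e_l) = R_{ijkl} satisfies ρ(ω,ω) ≤ ρ₁·|ω|² for every 2-vector ω ∈ Λ²Q, where the inner product on Λ²Q is the one making {e_i∧e_j : 1 ≤ i < j ≤ q} orthonormal. Then for every alternating p-form α on Q with 2 ≤ p ≤ q: (1/2)·Σ_{i,j,k,l=1}^q R_{ijkl}·⟨(e_j∧e_i)⌟α, (e_l∧e_k)⌟α⟩ ≤ p(p−1)·ρ₁·|α|². -/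
open scoped BigOperators RealInnerProductSpace

variable {Q : Type*} [NormedAddCommGroup Q] [InnerProductSpace ℝ Q]

lemma half_sum {q : ℕ} (g : Fin q → Fin q → ℝ) (hsym : ∀ i j, g i j = g j i)
    (hdiag : ∀ i, g i i = 0) :
    ∑ i : Fin q, ∑ j : Fin q, g i j
      = 2 * ∑ i : Fin q, ∑ j ∈ Finset.univ.filter (fun j : Fin q => i < j), g i j := by
  have key : ∀ i : Fin q, ∑ j : Fin q, g i j
      = (∑ j ∈ Finset.univ.filter (fun j : Fin q => i < j), g i j)
        + ∑ j ∈ Finset.univ.filter (fun j : Fin q => j < i), g i j := by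
    intro i
    rw [← Finset.sum_filter_add_sum_filter_not Finset.univ (fun j => i < j)]
    congr 1
    rw [← Finset.sum_filter_add_sum_filter_not (Finset.univ.filter (fun j : Fin q => ¬ i < j)) (fun j => j < i)]
    have h1 : (Finset.univ.filter (fun j : Fin q => ¬ i < j)).filter (fun j => j < i)
        = Finset.univ.filter (fun j : Fin q => j < i) := by
      ext j; simp; omega
    have h2 : ∑ j ∈ (Finset.univ.filter (fun j : Fin q => ¬ i < j)).filter (fun j => ¬ j < i), g i j = 0 := by
      apply Finset.sum_eq_zero
      intro j hj
      simp at hj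
      have : j = i := by omega
      rw [this, hdiag]
    rw [h1, h2, add_zero]
  have swap : ∑ i : Fin q, ∑ j ∈ Finset.univ.filter (fun j : Fin q => j < i), g i j
      = ∑ i : Fin q, ∑ j ∈ Finset.univ.filter (fun j : Fin q => i < j), g i j := by
    rw [Finset.sum_comm' (t' := Finset.univ) (s' := fun j => Finset.univ.filter (fun i : Fin q => j < i))]
    · exact Finset.sum_congr rfl fun j _ => Finset.sum_congr rfl fun i _ => hsym i j
    · intro i j; simp
  simp_rw [key]
  rw [Finset.sum_add_distrib, swap]; ring

lemma alt_swap {m : ℕ} (α : AlternatingMap ℝ Q ℝ (Fin (m+2))) (x y : Q) (v : Fin m → Q) :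
    α (Fin.cons x (Fin.cons y v)) = - α (Fin.cons y (Fin.cons x v)) := by
  have h : Fin.cons x (Fin.cons y v) = (Fin.cons y (Fin.cons x v) : Fin (m+2) → Q) ∘ Equiv.swap 0 1 := by
    funext k
    refine Fin.cases ?_ (fun j => ?_) k
    · simp [Equiv.swap_apply_left]
    · refine Fin.cases ?_ (fun j' => ?_) j
      · simp [Equiv.swap_apply_right]
      · have h0 : (j'.succ.succ : Fin (m+2)) ≠ 0 := by
          simp [Fin.ext_iff]
        have h1 : (j'.succ.succ : Fin (m+2)) ≠ 1 := by
          simp [Fin.ext_iff]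
        simp [Equiv.swap_apply_of_ne_of_ne h0 h1]
  rw [h, α.map_swap _ (by simp [Fin.ext_iff] : (0 : Fin (m+2)) ≠ 1)]

lemma alt_diag {m : ℕ} (α : AlternatingMap ℝ Q ℝ (Fin (m+2))) (x : Q) (v : Fin m → Q) :
    α (Fin.cons x (Fin.cons x v)) = 0 := by
  apply α.map_eq_zero_of_eq _ (i := (0 : Fin (m+2))) (j := 1) (by simp) (by simp [Fin.ext_iff])

lemma sum_reindex {q m : ℕ} (h : (Fin (m+2) → Fin q) → ℝ) :
    ∑ g : Fin (m+2) → Fin q, h g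
      = ∑ i : Fin q, ∑ j : Fin q, ∑ f : Fin m → Fin q, h (Fin.cons i (Fin.cons j f)) := by
  rw [← (Fin.consEquiv (fun _ : Fin (m+2) => Fin q)).sum_comp, Fintype.sum_prod_type]
  congr 1; funext i
  rw [← (Fin.consEquiv (fun _ : Fin (m+1) => Fin q)).sum_comp, Fintype.sum_prod_type]
  rfl

lemma sum_comm3 {a b c : Type*} [Fintype a] [Fintype b] [Fintype c] (X : a → b → c → ℝ) :
    ∑ x : a, ∑ y : b, ∑ z : c, X x y z = ∑ z : c, ∑ x : a, ∑ y : b, X x y z := by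
  have h : ∀ x : a, ∑ y : b, ∑ z : c, X x y z = ∑ z : c, ∑ y : b, X x y z :=
    fun x => Finset.sum_comm
  simp_rw [h]; exact Finset.sum_comm

lemma sum_comm4 {a b c d : Type*} [Fintype a] [Fintype b] [Fintype c] [Fintype d]
    (X : a → b → c → d → ℝ) :
    ∑ x : a, ∑ y : b, ∑ z : c, ∑ u : d, X x y z u
      = ∑ u : d, ∑ x : a, ∑ y : b, ∑ z : c, X x y z u := by
  have h : ∀ x : a, ∑ y : b, ∑ z : c, ∑ u : d, X x y z u
      = ∑ u : d, ∑ y : b, ∑ z : c, X x y z u := fun x => sum_comm3 _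
  simp_rw [h]; exact Finset.sum_comm

lemma sum_comm5 {a b c d f : Type*} [Fintype a] [Fintype b] [Fintype c] [Fintype d] [Fintype f]
    (X : a → b → c → d → f → ℝ) :
    ∑ x : a, ∑ y : b, ∑ z : c, ∑ u : d, ∑ v : f, X x y z u v
      = ∑ v : f, ∑ x : a, ∑ y : b, ∑ z : c, ∑ u : d, X x y z u v := by
  have h : ∀ x : a, ∑ y : b, ∑ z : c, ∑ u : d, ∑ v : f, X x y z u v
      = ∑ v : f, ∑ y : b, ∑ z : c, ∑ u : d, X x y z u v := fun x => sum_comm4 _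
  simp_rw [h]; exact Finset.sum_comm

/-- Curvature-operator estimate: if the symmetric bilinear form `ρ` on `Λ²Q` determined by
`ρ(e_i∧e_j, e_k∧e_l) = R_{ijkl}` satisfies `ρ(ω,ω) ≤ ρ₁·|ω|²` for every `2`-vector `ω`
(expressed via coefficients `w i j` of `ω = ∑_{i<j} w i j · e_i∧e_j` in the orthonormal basis
`{e_i∧e_j : i < j}` of `Λ²Q`), then for every `p`-form `α` with `2 ≤ p ≤ q`,
`(1/2)∑_{i,j,k,l} R_{ijkl}·⟨(e_j∧e_i)⌟α,(e_l∧e_k)⌟α⟩ ≤ p(p−1)·ρ₁·|α|²`. -/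
theorem stmt7 {q p : ℕ} (hp2 : 2 ≤ p) (hpq : p ≤ q) (e : OrthonormalBasis (Fin q) ℝ Q)
    (R : Fin q → Fin q → Fin q → Fin q → ℝ)
    (hR1 : ∀ i j k l, R i j k l = - R j i k l)
    (hR2 : ∀ i j k l, R i j k l = - R i j l k)
    (hR3 : ∀ i j k l, R i j k l = R k l i j)
    (ρ₁ : ℝ)
    (hρ : ∀ w : Fin q → Fin q → ℝ,
      ∑ i : Fin q, ∑ j ∈ Finset.univ.filter (fun j : Fin q => i < j),
        ∑ k : Fin q, ∑ l ∈ Finset.univ.filter (fun l : Fin q => k < l),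
          w i j * w k l * R i j k l
        ≤ ρ₁ * ∑ i : Fin q, ∑ j ∈ Finset.univ.filter (fun j : Fin q => i < j), (w i j) ^ 2)
    (α : AlternatingMap ℝ Q ℝ (Fin p)) :
    (1 / 2 : ℝ) * ∑ i : Fin q, ∑ j : Fin q, ∑ k : Fin q, ∑ l : Fin q,
        R i j k l *
          formInner ⇑e (iprod (e j) (iprod (e i) α)) (iprod (e l) (iprod (e k) α))
      ≤ (p : ℝ) * ((p : ℝ) - 1) * ρ₁ * formInner ⇑e α α := by
  obtain ⟨m, rfl⟩ : ∃ m, p = m + 2 := ⟨p - 2, by omega⟩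
  set A : Fin q → Fin q → (Fin m → Fin q) → ℝ :=
    fun i j f => α (Fin.cons (e i) (Fin.cons (e j) (⇑e ∘ f))) with hA
  have hform : ∀ i j k l : Fin q,
      formInner ⇑e (iprod (e j) (iprod (e i) α)) (iprod (e l) (iprod (e k) α))
        = (1 / (Nat.factorial m : ℝ)) * ∑ f : Fin m → Fin q, A i j f * A k l f := by
    intro i j k l
    show (1 / (Nat.factorial m : ℝ)) * ∑ f : Fin m → Fin q,
        ((α.curryLeft (e i)).curryLeft (e j)) (⇑e ∘ f) * ((α.curryLeft (e k)).curryLeft (e l)) (⇑e ∘ f)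
      = _
    congr 1
  have hAsym : ∀ i j f, A i j f = - A j i f := fun i j f => alt_swap α (e i) (e j) (⇑e ∘ f)
  have hAdiag : ∀ i f, A i i f = 0 := fun i f => alt_diag α (e i) (⇑e ∘ f)
  -- key per-f inequality
  have key : ∀ f : Fin m → Fin q,
      ∑ i : Fin q, ∑ j : Fin q, ∑ k : Fin q, ∑ l : Fin q, R i j k l * A i j f * A k l f
        ≤ 2 * ρ₁ * ∑ i : Fin q, ∑ j : Fin q, (A i j f) ^ 2 := by
    intro f
    have hwsym : ∀ i j, A i j f = - A j i f := fun i j => hAsym i j f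
    have hwdiag : ∀ i, A i i f = 0 := fun i => hAdiag i f
    have hsq : ∑ i : Fin q, ∑ j : Fin q, (A i j f) ^ 2
        = 2 * ∑ i : Fin q, ∑ j ∈ Finset.univ.filter (fun j : Fin q => i < j), (A i j f) ^ 2 := by
      apply half_sum
      · intro i j; rw [hwsym i j]; ring
      · intro i; rw [hwdiag i]; ring
    have step1 : ∀ i j : Fin q, ∑ k : Fin q, ∑ l : Fin q, A i j f * A k l f * R i j k l
        = 2 * ∑ k : Fin q, ∑ l ∈ Finset.univ.filter (fun l : Fin q => k < l),
            A i j f * A k l f * R i j k l := by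
      intro i j
      apply half_sum (g := fun k l => A i j f * A k l f * R i j k l)
      · intro k l; rw [hR2 i j k l, hwsym k l]; ring
      · intro k; rw [hwdiag k]; ring
    have step2 : ∑ i : Fin q, ∑ j : Fin q, (∑ k : Fin q, ∑ l : Fin q, A i j f * A k l f * R i j k l)
        = 2 * ∑ i : Fin q, ∑ j ∈ Finset.univ.filter (fun j : Fin q => i < j),
            ∑ k : Fin q, ∑ l : Fin q, A i j f * A k l f * R i j k l := by
      apply half_sum (g := fun i j => ∑ k : Fin q, ∑ l : Fin q, A i j f * A k l f * R i j k l)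
      · intro i j
        refine Finset.sum_congr rfl fun k _ => Finset.sum_congr rfl fun l _ => ?_
        rw [hR1 i j k l, hwsym i j]; ring
      · intro i
        apply Finset.sum_eq_zero; intro k _
        apply Finset.sum_eq_zero; intro l _
        rw [hwdiag i]; ring
    calc ∑ i : Fin q, ∑ j : Fin q, ∑ k : Fin q, ∑ l : Fin q, R i j k l * A i j f * A k l f
        = ∑ i : Fin q, ∑ j : Fin q, ∑ k : Fin q, ∑ l : Fin q, A i j f * A k l f * R i j k l := by
          refine Finset.sum_congr rfl fun i _ => Finset.sum_congr rfl fun j _ =>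
            Finset.sum_congr rfl fun k _ => Finset.sum_congr rfl fun l _ => by ring
      _ = 4 * ∑ i : Fin q, ∑ j ∈ Finset.univ.filter (fun j : Fin q => i < j),
            ∑ k : Fin q, ∑ l ∈ Finset.univ.filter (fun l : Fin q => k < l),
              A i j f * A k l f * R i j k l := by
          rw [step2]
          simp_rw [step1, ← Finset.mul_sum]
          ring
      _ ≤ 4 * (ρ₁ * ∑ i : Fin q, ∑ j ∈ Finset.univ.filter (fun j : Fin q => i < j), (A i j f) ^ 2) := by
          have := hρ (fun i j => A i j f)
          linarith
      _ = 2 * ρ₁ * ∑ i : Fin q, ∑ j : Fin q, (A i j f) ^ 2 := by rw [hsq]; ring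
  -- assemble
  simp_rw [hform]
  set c : ℝ := 1 / (Nat.factorial m : ℝ) with hc
  have hcpos : 0 ≤ c := by positivity
  have lhs_eq : ∑ i : Fin q, ∑ j : Fin q, ∑ k : Fin q, ∑ l : Fin q,
        R i j k l * (c * ∑ f : Fin m → Fin q, A i j f * A k l f)
      = c * ∑ f : Fin m → Fin q, ∑ i : Fin q, ∑ j : Fin q, ∑ k : Fin q, ∑ l : Fin q,
          R i j k l * A i j f * A k l f := by
    simp_rw [Finset.mul_sum]
    rw [← sum_comm5 (X := fun i j k l f => c * (R i j k l * A i j f * A k l f))]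
    refine Finset.sum_congr rfl fun i _ => Finset.sum_congr rfl fun j _ =>
      Finset.sum_congr rfl fun k _ => Finset.sum_congr rfl fun l _ =>
      Finset.sum_congr rfl fun f _ => by ring
  rw [lhs_eq]
  have hsum_le : ∑ f : Fin m → Fin q, ∑ i : Fin q, ∑ j : Fin q, ∑ k : Fin q, ∑ l : Fin q,
        R i j k l * A i j f * A k l f
      ≤ 2 * ρ₁ * ∑ f : Fin m → Fin q, ∑ i : Fin q, ∑ j : Fin q, (A i j f) ^ 2 := by
    rw [Finset.mul_sum]
    exact Finset.sum_le_sum fun f _ => key f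
  have hre : ∑ f : Fin m → Fin q, ∑ i : Fin q, ∑ j : Fin q, (A i j f) ^ 2
      = ∑ g : Fin (m+2) → Fin q, α (⇑e ∘ g) * α (⇑e ∘ g) := by
    rw [sum_reindex (h := fun g => α (⇑e ∘ g) * α (⇑e ∘ g))]
    rw [← sum_comm3 (X := fun i j f => (A i j f) ^ 2)]
    refine Finset.sum_congr rfl fun i _ => Finset.sum_congr rfl fun j _ =>
      Finset.sum_congr rfl fun f _ => ?_
    simp only [hA, Fin.comp_cons]
    ring
  calc (1 / 2 : ℝ) * (c * ∑ f : Fin m → Fin q, ∑ i : Fin q, ∑ j : Fin q, ∑ k : Fin q, ∑ l : Fin q,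
          R i j k l * A i j f * A k l f)
      ≤ (1 / 2 : ℝ) * (c * (2 * ρ₁ * ∑ f : Fin m → Fin q, ∑ i : Fin q, ∑ j : Fin q, (A i j f) ^ 2)) := by
        apply mul_le_mul_of_nonneg_left _ (by norm_num : (0:ℝ) ≤ 1/2)
        exact mul_le_mul_of_nonneg_left hsum_le hcpos
    _ = ((m : ℝ) + 2) * (((m : ℝ) + 2) - 1) * ρ₁ * formInner ⇑e α α := by
        rw [hre]
        show _ = _ * ((1 / (Nat.factorial (m+2) : ℝ)) * ∑ g : Fin (m+2) → Fin q, α (⇑e ∘ g) * α (⇑e ∘ g))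
        have hfac : ((Nat.factorial (m+2) : ℝ)) = ((m:ℝ)+2) * (((m:ℝ)+1) * (Nat.factorial m : ℝ)) := by
          rw [show m + 2 = (m+1)+1 from rfl, Nat.factorial_succ, Nat.factorial_succ]
          push_cast; ring
        have hm : (Nat.factorial m : ℝ) ≠ 0 := Nat.cast_ne_zero.mpr (Nat.factorial_ne_zero m)
        rw [hfac, hc]
        field_simp
        ring
    _ = ((m+2 : ℕ) : ℝ) * (((m+2 : ℕ) : ℝ) - 1) * ρ₁ * formInner ⇑e α α := by push_cast; ring
end

section
/- For 1 ≤ i, j ≤ q let ℛ(e_i,e_j) : Q → Q be the linear map e_k ↦ Σ_{l=1}^q R_{ijkl}·e_l, acting on an alternating p-form α (1 ≤ p ≤ q) by (ℛ(e_i,e_j)·α)(Z_1,…,Z_p) = −Σ_{a=1}^p α(Z_1,…,ℛ(e_i,e_j)Z_a,…,Z_p). Define the alternating p-form R(α) := −Σ_{i,j=1}^q e_j♭ ∧ (e_i ⌟ (ℛ(e_i,e_j)·α)). Then ⟨R(α), α⟩ = Σ_{i,j=1}^q Ric_{ij}·⟨e_i⌟α, e_j⌟α⟩ − (1/2)·Σ_{i,j,k,l=1}^q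 R_{ijkl}·⟨(e_j∧e_i)⌟α, (e_l∧e_k)⌟α⟩, where Ric_{ij} = Σ_{l=1}^q R_{lilj}. -/
/-!
Since `e_j♭ ∧ ·` is adjoint to `e_j ⌟ ·`, the left side is
`-∑_{i,j} ⟨e_i ⌟ (ℛ(e_i,e_j)·α), e_j ⌟ α⟩`. Expanding the derivation `ℛ(e_i,e_j)·α` on a
tuple `(e_i, Z)`, the slot holding `e_i` gives the Ricci term, and every other slot, once the
modified vector is moved to the front, gives `∑ R_{ijkl} ⟨(e_l∧e_i)⌟α, (e_k∧e_j)⌟α⟩`. The first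
Bianchi identity turns this last sum into `-1/2` times the full curvature term.
-/

open scoped BigOperators RealInnerProductSpace

variable {Q : Type*} [NormedAddCommGroup Q] [InnerProductSpace ℝ Q]

/-- The curvature operator `ℛ(e_i,e_j) : Q → Q`, `e_k ↦ ∑_l R_{ijkl} e_l`, extended linearly. -/
noncomputable def curvMap {q : ℕ} (e : Fin q → Q) (R : Fin q → Fin q → Fin q → Fin q → ℝ)
    (i j : Fin q) (v : Q) : Q :=
  ∑ k : Fin q, ∑ l : Fin q, (R i j k l * ⟪e k, v⟫) • e l

/-- The derivation action of `ℛ(e_i,e_j)` on a `p`-form: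
`(ℛ(e_i,e_j)·α)(Z₁,…,Z_p) = −∑_a α(Z₁,…,ℛ(e_i,e_j)Z_a,…,Z_p)`, evaluated at a tuple `Z`. -/
noncomputable def curvAct {q n : ℕ} (e : Fin q → Q) (R : Fin q → Fin q → Fin q → Fin q → ℝ)
    (i j : Fin q) (α : AlternatingMap ℝ Q ℝ (Fin (n + 1))) (Z : Fin (n + 1) → Q) : ℝ :=
  -∑ a : Fin (n + 1), α (Function.update Z a (curvMap e R i j (Z a)))

/-- The component of the `p`-form `R(α) = −∑_{i,j} e_j♭ ∧ (e_i ⌟ (ℛ(e_i,e_j)·α))` on the basis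
tuple `(e_{f 0},…,e_{f p₋₁})`, the wedge with the `1`-form `e_j♭` being expanded as
`(e_j♭∧β)(Z₀,…) = ∑_t (−1)^t ⟨e_j, Z_t⟩ β(Z₀,…,Ẑ_t,…)`. -/
noncomputable def RalphaComp {q n : ℕ} (e : Fin q → Q)
    (R : Fin q → Fin q → Fin q → Fin q → ℝ) (α : AlternatingMap ℝ Q ℝ (Fin (n + 1)))
    (f : Fin (n + 1) → Fin q) : ℝ :=
  -∑ i : Fin q, ∑ j : Fin q, ∑ t : Fin (n + 1),
    (-1 : ℝ) ^ (t : ℕ) * ⟪e j, e (f t)⟫ *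
      curvAct e R i j α (Fin.cons (e i) (e ∘ f ∘ t.succAbove))

theorem Fin.comp_insertNth {n : ℕ} {α β : Type*} (g : α → β) (t : Fin (n + 1)) (x : α)
    (v : Fin n → α) : g ∘ t.insertNth x v = t.insertNth (g x) (g ∘ v) := by
  ext j
  induction j using Fin.succAboveCases t <;> simp

theorem Fin.sum_univ_fun_eq_sum_insertNth {n : ℕ} {α M : Type*} [Fintype α] [AddCommMonoid M]
    (t : Fin (n + 1)) (F : (Fin (n + 1) → α) → M) :
    ∑ f, F f = ∑ x, ∑ v : Fin n → α, F (t.insertNth x v) := by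
  rw [← Fintype.sum_prod_type']
  exact (Fintype.sum_equiv (Fin.insertNthEquiv (fun _ => α) t) _ _ fun _ => rfl).symm

theorem AlternatingMap.curryLeft_curryLeft_swap {R M N : Type*} [CommRing R] [AddCommGroup M]
    [Module R M] [AddCommGroup N] [Module R N] {n : ℕ} (f : M [⋀^Fin (n + 2)]→ₗ[R] N)
    (x y : M) : (f.curryLeft x).curryLeft y = -(f.curryLeft y).curryLeft x := by
  ext v
  have hswap : (Fin.cons y (Fin.cons x v) : Fin (n + 2) → M) ∘ Equiv.swap 0 1
      = Fin.cons x (Fin.cons y v) := by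
    funext i
    refine Fin.cases ?_ (Fin.cases ?_ fun k => ?_) i
    · simp
    · simp
    · rw [Function.comp_apply, Equiv.swap_apply_of_ne_of_ne] <;> simp [Fin.ext_iff]
  have h := f.map_swap (Fin.cons y (Fin.cons x v)) (i := 0) (j := 1) (by simp)
  rw [hswap] at h
  exact h

theorem AlternatingMap.neg_one_pow_mul_map_insertNth {R M : Type*} [CommRing R]
    [AddCommGroup M] [Module R M] {n : ℕ} (f : M [⋀^Fin (n + 1)]→ₗ[R] R) (p : Fin (n + 1))
    (x : M) (v : Fin n → M) : (-1) ^ (p : ℕ) * f (p.insertNth x v) = f (Fin.cons x v) := by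
  have h := f.neg_one_pow_smul_map_insertNth p x v
  rw [zsmul_eq_mul] at h
  push_cast at h
  exact h

theorem sum_riemann_mul_eq_neg_half {ι : Type*} [Fintype ι] (R P : ι → ι → ι → ι → ℝ)
    (hR1 : ∀ i j k l, R i j k l = - R j i k l)
    (hR2 : ∀ i j k l, R i j k l = - R i j l k)
    (hR3 : ∀ i j k l, R i j k l = R k l i j)
    (hBianchi : ∀ i j k l, R i j k l + R j k i l + R k i j l = 0)
    (hP : ∀ i j k l, P i j l k = -P i j k l) :
    ∑ i, ∑ j, ∑ k, ∑ l, R i j k l * P i l j k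
      = -(1 / 2) * ∑ i, ∑ j, ∑ k, ∑ l, R i j k l * P i j k l := by
  have swap23 : ∀ F : ι → ι → ι → ι → ℝ,
      ∑ a, ∑ b, ∑ c, ∑ d, F a b c d = ∑ a, ∑ b, ∑ c, ∑ d, F a c b d :=
    fun F => Finset.sum_congr rfl fun _ _ => Finset.sum_comm
  have swap34 : ∀ F : ι → ι → ι → ι → ℝ,
      ∑ a, ∑ b, ∑ c, ∑ d, F a b c d = ∑ a, ∑ b, ∑ c, ∑ d, F a b d c :=
    fun F => Finset.sum_congr rfl fun _ _ => Finset.sum_congr rfl fun _ _ => Finset.sum_comm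
  have hR : ∀ i j k l, R i j k l = R i k j l - R i l j k := fun i j k l => by
    linarith [hBianchi i j k l, hR3 j k i l, hR1 k i j l]
  -- with `X = ∑ F`, the full sum is `2 X` and the crossed one is `-X`
  set F : ι → ι → ι → ι → ℝ := fun a b c d => R a c b d * P a b c d
  have hfull : ∑ i, ∑ j, ∑ k, ∑ l, R i j k l * P i j k l
      = ∑ a, ∑ b, ∑ c, ∑ d, F a b c d + ∑ a, ∑ b, ∑ c, ∑ d, F a b d c := by
    simp only [F, ← Finset.sum_add_distrib]
    exact Finset.sum_congr rfl fun i _ => Finset.sum_congr rfl fun j _ =>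
      Finset.sum_congr rfl fun k _ => Finset.sum_congr rfl fun l _ => by
        rw [hR i j k l, hP i j k l]; ring
  have hcross : ∑ i, ∑ j, ∑ k, ∑ l, R i j k l * P i l j k
      = -∑ a, ∑ b, ∑ c, ∑ d, F a d b c := by
    simp only [F, ← Finset.sum_neg_distrib]
    exact Finset.sum_congr rfl fun i _ => Finset.sum_congr rfl fun j _ =>
      Finset.sum_congr rfl fun k _ => Finset.sum_congr rfl fun l _ => by
        rw [hR2 i j k l]; ring
  rw [hfull, hcross, ← swap34 F, swap34 fun a b c d => F a d b c, ← swap23 F]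
  ring

theorem iprod_iprod_swap {p : ℕ} (X Y : Q) (α : AlternatingMap ℝ Q ℝ (Fin p)) :
    iprod X (iprod Y α) = -iprod Y (iprod X α) := by
  match p with
  | 0 => simp [iprod]
  | 1 => simp [iprod]
  | _ + 2 => exact α.curryLeft_curryLeft_swap Y X

theorem formInner_neg_right {q p : ℕ} (e : Fin q → Q) (α β : AlternatingMap ℝ Q ℝ (Fin p)) :
    formInner e α (-β) = -formInner e α β := by
  simp [formInner, Finset.sum_neg_distrib]

section Frame

variable {q : ℕ} {e : Fin q → Q} (R : Fin q → Fin q → Fin q → Fin q → ℝ)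

theorem sum_mul_eq_factorial_mul_formInner_iprod {n : ℕ}
    (α : AlternatingMap ℝ Q ℝ (Fin (n + 1))) (x y : Q) :
    ∑ g : Fin n → Fin q, α (Fin.cons x (e ∘ g)) * α (Fin.cons y (e ∘ g))
      = n.factorial * formInner e (iprod x α) (iprod y α) := by
  simp only [formInner, Nat.add_one_sub_one, add_tsub_cancel_right, one_div]
  rw [mul_inv_cancel_left₀ (by positivity)]
  rfl

theorem sum_mul_eq_factorial_mul_formInner_iprod_iprod {m : ℕ}
    (α : AlternatingMap ℝ Q ℝ (Fin (m + 2))) (x y z w : Q) :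
    ∑ h : Fin m → Fin q,
        α (Fin.cons x (Fin.cons y (e ∘ h))) * α (Fin.cons z (Fin.cons w (e ∘ h)))
      = m.factorial * formInner e (iprod y (iprod x α)) (iprod w (iprod z α)) := by
  simp only [formInner, Nat.add_one_sub_one, add_tsub_cancel_right, one_div]
  rw [mul_inv_cancel_left₀ (by positivity)]
  rfl

theorem curvMap_apply_of_orthonormal (he : Orthonormal ℝ e) (i j k : Fin q) :
    curvMap e R i j (e k) = ∑ l, R i j k l • e l := by
  simp [curvMap, orthonormal_iff_ite.mp he, mul_ite, ite_smul]

theorem curvAct_cons_of_orthonormal (he : Orthonormal ℝ e) {n : ℕ}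
    (i j : Fin q) (α : AlternatingMap ℝ Q ℝ (Fin (n + 1))) (g : Fin n → Fin q) :
    curvAct e R i j α (Fin.cons (e i) (e ∘ g)) =
      -((∑ l, R i j i l * α (Fin.cons (e l) (e ∘ g))) +
        ∑ s, ∑ l, R i j (g s) l * α (Fin.cons (e i) (Function.update (e ∘ g) s (e l)))) := by
  simp only [curvAct, curvMap_apply_of_orthonormal R he, ← Fin.comp_cons, Function.comp_apply,
    α.map_update_sum, α.map_update_smul, smul_eq_mul, Fin.sum_univ_succ]
  simp [Fin.comp_cons, Fin.update_cons_zero, Fin.cons_update]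

/-- The coordinate form of `⟨e_j♭ ∧ β_j, α⟩ = ⟨β_j, e_j ⌟ α⟩`, summed over `j` and scaled
by `(n+1)!`. -/
theorem sum_wedge_mul_of_orthonormal (he : Orthonormal ℝ e) {n : ℕ}
    (β : Fin q → (Fin n → Q) → ℝ) (α : AlternatingMap ℝ Q ℝ (Fin (n + 1))) :
    ∑ f : Fin (n + 1) → Fin q,
        (∑ j, ∑ t : Fin (n + 1),
          (-1 : ℝ) ^ (t : ℕ) * ⟪e j, e (f t)⟫ * β j (e ∘ f ∘ t.succAbove)) * α (e ∘ f)
      = (n + 1) * ∑ j, ∑ g : Fin n → Fin q, β j (e ∘ g) * α (Fin.cons (e j) (e ∘ g)) := by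
  have hδ : ∀ f : Fin (n + 1) → Fin q, ∑ j, ∑ t : Fin (n + 1),
      (-1 : ℝ) ^ (t : ℕ) * ⟪e j, e (f t)⟫ * β j (e ∘ f ∘ t.succAbove)
        = ∑ t : Fin (n + 1), (-1 : ℝ) ^ (t : ℕ) * β (f t) (e ∘ f ∘ t.succAbove) := fun f => by
    rw [Finset.sum_comm]
    simp [orthonormal_iff_ite.mp he]
  simp_rw [hδ, Finset.sum_mul]
  rw [Finset.sum_comm]
  calc _ = ∑ _t : Fin (n + 1), ∑ j, ∑ g : Fin n → Fin q,
          β j (e ∘ g) * α (Fin.cons (e j) (e ∘ g)) :=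
        Finset.sum_congr rfl fun t _ => by
          rw [Fin.sum_univ_fun_eq_sum_insertNth t]
          refine Finset.sum_congr rfl fun j _ => Finset.sum_congr rfl fun g _ => ?_
          rw [Fin.insertNth_apply_same, Fin.insertNth_comp_succAbove, Fin.comp_insertNth,
            ← α.neg_one_pow_mul_map_insertNth t]
          ring
    _ = _ := by simp

theorem sum_RalphaComp_mul_of_orthonormal (he : Orthonormal ℝ e) {n : ℕ}
    (α : AlternatingMap ℝ Q ℝ (Fin (n + 1))) :
    ∑ f : Fin (n + 1) → Fin q, RalphaComp e R α f * α (e ∘ f)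
      = -(n + 1) * ∑ i, ∑ j, ∑ g : Fin n → Fin q,
          curvAct e R i j α (Fin.cons (e i) (e ∘ g)) * α (Fin.cons (e j) (e ∘ g)) := by
  have hR : ∀ f, RalphaComp e R α f = -∑ j, ∑ t : Fin (n + 1), (-1 : ℝ) ^ (t : ℕ) *
      ⟪e j, e (f t)⟫ * ∑ i, curvAct e R i j α (Fin.cons (e i) (e ∘ f ∘ t.succAbove)) := by
    intro f
    simp only [RalphaComp, Finset.mul_sum]
    rw [Finset.sum_comm]
    exact congrArg _ (Finset.sum_congr rfl fun j _ => Finset.sum_comm)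
  simp only [hR, neg_mul, Finset.sum_neg_distrib]
  rw [sum_wedge_mul_of_orthonormal he (fun j Z => ∑ i, curvAct e R i j α (Fin.cons (e i) Z))]
  simp only [Finset.sum_mul]
  exact congrArg _ (congrArg _
    ((Finset.sum_congr rfl fun j _ => Finset.sum_comm).trans Finset.sum_comm))

theorem sum_mul_map_cons_update {m : ℕ} (α : AlternatingMap ℝ Q ℝ (Fin (m + 2)))
    (s : Fin (m + 1)) (c : Fin q → ℝ) (x y z : Q) :
    ∑ g : Fin (m + 1) → Fin q,
        c (g s) * (α (Fin.cons x (Function.update (e ∘ g) s z)) * α (Fin.cons y (e ∘ g)))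
      = ∑ k, c k * ∑ h : Fin m → Fin q,
          α (Fin.cons x (Fin.cons z (e ∘ h))) * α (Fin.cons y (Fin.cons (e k) (e ∘ h))) := by
  rw [Fin.sum_univ_fun_eq_sum_insertNth s]
  refine Finset.sum_congr rfl fun k _ => ?_
  rw [Finset.mul_sum]
  refine Finset.sum_congr rfl fun h _ => ?_
  have hx : (-1) ^ (s : ℕ) * α (Fin.cons x (s.insertNth z (e ∘ h)))
      = α (Fin.cons x (Fin.cons z (e ∘ h))) :=
    (α.curryLeft x).neg_one_pow_mul_map_insertNth s z (e ∘ h)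
  have hy : (-1) ^ (s : ℕ) * α (Fin.cons y (s.insertNth (e k) (e ∘ h)))
      = α (Fin.cons y (Fin.cons (e k) (e ∘ h))) :=
    (α.curryLeft y).neg_one_pow_mul_map_insertNth s (e k) (e ∘ h)
  rw [Fin.insertNth_apply_same, Fin.comp_insertNth, Fin.update_insertNth, ← hx, ← hy,
    mul_mul_mul_comm, ← mul_pow, neg_one_mul, neg_neg, one_pow, one_mul]

theorem sum_first_slot_term_eq (hR3 : ∀ i j k l, R i j k l = R k l i j) {n : ℕ}
    (α : AlternatingMap ℝ Q ℝ (Fin (n + 1))) :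
    ∑ i, ∑ j, ∑ g : Fin n → Fin q,
        (∑ l, R i j i l * α (Fin.cons (e l) (e ∘ g))) * α (Fin.cons (e j) (e ∘ g))
      = n.factorial * ∑ i, ∑ j,
          (∑ l, R l i l j) * formInner e (iprod (e i) α) (iprod (e j) α) := by
  calc _ = ∑ i, ∑ j, ∑ l, R i j i l *
          ∑ g : Fin n → Fin q, α (Fin.cons (e l) (e ∘ g)) * α (Fin.cons (e j) (e ∘ g)) := by
        simp only [Finset.sum_mul, Finset.mul_sum, mul_assoc]
        exact Finset.sum_congr rfl fun i _ => Finset.sum_congr rfl fun j _ => Finset.sum_comm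
    _ = ∑ l, ∑ j, ∑ i, R i l i j *
          ∑ g : Fin n → Fin q, α (Fin.cons (e l) (e ∘ g)) * α (Fin.cons (e j) (e ∘ g)) := by
        rw [Finset.sum_comm]
        refine ((Finset.sum_congr rfl fun j _ => Finset.sum_comm).trans Finset.sum_comm).trans ?_
        exact Finset.sum_congr rfl fun l _ => Finset.sum_congr rfl fun j _ =>
          Finset.sum_congr rfl fun i _ => by rw [hR3 i j i l]
    _ = _ := by
        simp only [sum_mul_eq_factorial_mul_formInner_iprod, Finset.mul_sum, Finset.sum_mul]
        exact Finset.sum_congr rfl fun l _ => Finset.sum_congr rfl fun j _ =>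
          Finset.sum_congr rfl fun i _ => by ring

theorem sum_other_slots_term_eq {n : ℕ} (α : AlternatingMap ℝ Q ℝ (Fin (n + 1))) :
    ∑ i, ∑ j, ∑ g : Fin n → Fin q,
        (∑ s, ∑ l, R i j (g s) l * α (Fin.cons (e i) (Function.update (e ∘ g) s (e l)))) *
          α (Fin.cons (e j) (e ∘ g))
      = n.factorial * ∑ i, ∑ j, ∑ k, ∑ l, R i j k l *
          formInner e (iprod (e l) (iprod (e i) α)) (iprod (e k) (iprod (e j) α)) := by
  cases n with
  | zero => simp [iprod, formInner]
  | succ m =>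
    rw [Finset.mul_sum]
    refine Finset.sum_congr rfl fun i _ => ?_
    rw [Finset.mul_sum]
    refine Finset.sum_congr rfl fun j _ => ?_
    calc _ = ∑ s : Fin (m + 1), ∑ l, ∑ g : Fin (m + 1) → Fin q, R i j (g s) l *
            (α (Fin.cons (e i) (Function.update (e ∘ g) s (e l))) *
              α (Fin.cons (e j) (e ∘ g))) := by
          simp only [Finset.sum_mul, mul_assoc]
          rw [Finset.sum_comm]
          exact Finset.sum_congr rfl fun s _ => Finset.sum_comm
      _ = ∑ _s : Fin (m + 1), ∑ l, ∑ k, R i j k l * (m.factorial *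
            formInner e (iprod (e l) (iprod (e i) α)) (iprod (e k) (iprod (e j) α))) := by
          refine Finset.sum_congr rfl fun s _ => Finset.sum_congr rfl fun l _ => ?_
          refine (sum_mul_map_cons_update α s (fun k => R i j k l) _ _ _).trans ?_
          simp only [sum_mul_eq_factorial_mul_formInner_iprod_iprod]
      _ = _ := by
          simp only [Finset.sum_const, Finset.card_univ, Fintype.card_fin, nsmul_eq_mul,
            Nat.factorial_succ, Finset.mul_sum]
          rw [Finset.sum_comm]
          push_cast
          exact Finset.sum_congr rfl fun k _ => Finset.sum_congr rfl fun l _ => by ring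

end Frame

theorem stmt8_general {q n : ℕ} (e : OrthonormalBasis (Fin q) ℝ Q)
    (R : Fin q → Fin q → Fin q → Fin q → ℝ)
    (hR1 : ∀ i j k l, R i j k l = - R j i k l)
    (hR2 : ∀ i j k l, R i j k l = - R i j l k)
    (hR3 : ∀ i j k l, R i j k l = R k l i j)
    (hBianchi : ∀ i j k l, R i j k l + R j k i l + R k i j l = 0)
    (α : AlternatingMap ℝ Q ℝ (Fin (n + 1))) :
    (1 / (Nat.factorial (n + 1) : ℝ)) *
        ∑ f : Fin (n + 1) → Fin q, RalphaComp ⇑e R α f * α (⇑e ∘ f)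
      = (∑ i : Fin q, ∑ j : Fin q,
            (∑ l : Fin q, R l i l j) * formInner ⇑e (iprod (e i) α) (iprod (e j) α))
        - (1 / 2 : ℝ) * ∑ i : Fin q, ∑ j : Fin q, ∑ k : Fin q, ∑ l : Fin q,
            R i j k l *
              formInner ⇑e (iprod (e j) (iprod (e i) α)) (iprod (e l) (iprod (e k) α)) := by
  have hP : ∀ i j k l, formInner ⇑e (iprod (e j) (iprod (e i) α)) (iprod (e k) (iprod (e l) α))
      = -formInner ⇑e (iprod (e j) (iprod (e i) α)) (iprod (e l) (iprod (e k) α)) :=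
    fun i j k l => by rw [iprod_iprod_swap (e k), formInner_neg_right]
  rw [sum_RalphaComp_mul_of_orthonormal R e.orthonormal]
  simp only [curvAct_cons_of_orthonormal R e.orthonormal, neg_mul, add_mul,
    Finset.sum_neg_distrib, Finset.sum_add_distrib]
  rw [sum_first_slot_term_eq R hR3, sum_other_slots_term_eq,
    sum_riemann_mul_eq_neg_half R (fun i j k l =>
      formInner ⇑e (iprod (e j) (iprod (e i) α)) (iprod (e l) (iprod (e k) α)))
      hR1 hR2 hR3 hBianchi hP, Nat.factorial_succ]
  push_cast
  field_simp
  ring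

/-- For curvature coefficients `R` with the symmetries of a Riemann tensor and a `p`-form `α`
with `1 ≤ p ≤ q` (here `p = n+1`),
`⟨R(α),α⟩ = ∑_{i,j} Ric_{ij}⟨e_i⌟α,e_j⌟α⟩ − (1/2)∑_{i,j,k,l} R_{ijkl}⟨(e_j∧e_i)⌟α,(e_l∧e_k)⌟α⟩`
with `Ric_{ij} = ∑_l R_{lilj}`. -/
theorem stmt8 {q n : ℕ} (hpq : n + 1 ≤ q) (e : OrthonormalBasis (Fin q) ℝ Q)
    (R : Fin q → Fin q → Fin q → Fin q → ℝ)
    (hR1 : ∀ i j k l, R i j k l = - R j i k l)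
    (hR2 : ∀ i j k l, R i j k l = - R i j l k)
    (hR3 : ∀ i j k l, R i j k l = R k l i j)
    (hBianchi : ∀ i j k l, R i j k l + R j k i l + R k i j l = 0)
    (α : AlternatingMap ℝ Q ℝ (Fin (n + 1))) :
    (1 / (Nat.factorial (n + 1) : ℝ)) *
        ∑ f : Fin (n + 1) → Fin q, RalphaComp ⇑e R α f * α (⇑e ∘ f)
      = (∑ i : Fin q, ∑ j : Fin q,
            (∑ l : Fin q, R l i l j) * formInner ⇑e (iprod (e i) α) (iprod (e j) α))
        - (1 / 2 : ℝ) * ∑ i : Fin q, ∑ j : Fin q, ∑ k : Fin q, ∑ l : Fin q,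
            R i j k l *
              formInner ⇑e (iprod (e j) (iprod (e i) α)) (iprod (e l) (iprod (e k) α)) :=
  stmt8_general e R hR1 hR2 hR3 hBianchi α
end

section
/- (Algebraic core of Proposition 4.1.) For every alternating p-form α on Q with 1 ≤ p ≤ q, writing ⟨R(α),α⟩ := Σ_{i,j=1}^q Ric^∇_{ij}·⟨e_i⌟α, e_j⌟α⟩ − (1/2)·Σ_{i,j,k,l=1}^q R^∇_{ijkl}·⟨(e_j∧e_i)⌟α, (e_l∧e_k)⌟α⟩, one has: 2·⟨R(α),α⟩ ≥ −((p−7)/3)·Σ_{i,j=1}^q Ric^∇_{ij}·⟨e_i⌟α, e_j⌟α⟩ + ((p−1)/3)·Σ_{i,j,l=1}^q R_{lilj}·⟨e_i⌟α, e_j⌟α⟩ − Σ_{i,j,k,l=1}^q R_{ijkl}·⟨(e_j∧e_i)⌟α, (e_l∧e_k)⌟α⟩ − Σ_{s=1}^r [ Σ_{i=1}^q |A_{e_i}V_s ⌟ α|² + 2·|(Σ_{i=1}^q A_{e_i}V_s ∧ e_i)⌟α|² ]. -/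
open scoped BigOperators RealInnerProductSpace

variable {Q : Type*} [NormedAddCommGroup Q] [InnerProductSpace ℝ Q]

/-- O'Neill's formula for the transverse curvature:
`R^∇_{ijkl} = R_{ijkl} + 2⟨A_{e_i}e_j, A_{e_k}e_l⟩ − ⟨A_{e_j}e_k, A_{e_i}e_l⟩ − ⟨A_{e_k}e_i, A_{e_j}e_l⟩`. -/
noncomputable def Rnab {q : ℕ} {L : Type*} [NormedAddCommGroup L] [InnerProductSpace ℝ L]
    (e : Fin q → Q) (R : Fin q → Fin q → Fin q → Fin q → ℝ)
    (A : Q →ₗ[ℝ] Q →ₗ[ℝ] L) (i j k l : Fin q) : ℝ :=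
  R i j k l + 2 * ⟪A (e i) (e j), A (e k) (e l)⟫
    - ⟪A (e j) (e k), A (e i) (e l)⟫ - ⟪A (e k) (e i), A (e j) (e l)⟫

/-- O'Neill's formula for the transverse Ricci curvature:
`Ric^∇_{ij} = ∑_l (R_{lilj} + 2⟨A_{e_l}e_i, A_{e_l}e_j⟩ − ⟨A_{e_i}e_l, A_{e_l}e_j⟩)`. -/
noncomputable def Ricnab {q : ℕ} {L : Type*} [NormedAddCommGroup L] [InnerProductSpace ℝ L]
    (e : Fin q → Q) (R : Fin q → Fin q → Fin q → Fin q → ℝ)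
    (A : Q →ₗ[ℝ] Q →ₗ[ℝ] L) (i j : Fin q) : ℝ :=
  ∑ l : Fin q, (R l i l j + 2 * ⟪A (e l) (e i), A (e l) (e j)⟫
    - ⟪A (e i) (e l), A (e l) (e j)⟫)


section SumSwap
lemma sw12 {A B M : Type*} [Fintype A] [Fintype B] [AddCommMonoid M] (f : A → B → M) :
    ∑ a, ∑ b, f a b = ∑ b, ∑ a, f a b := Finset.sum_comm

lemma sw23 {A B C M : Type*} [Fintype A] [Fintype B] [Fintype C] [AddCommMonoid M]
    (f : A → B → C → M) :
    ∑ a, ∑ b, ∑ c, f a b c = ∑ a, ∑ c, ∑ b, f a b c :=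
  Finset.sum_congr rfl fun _ _ => Finset.sum_comm

lemma sw34 {A B C D M : Type*} [Fintype A] [Fintype B] [Fintype C] [Fintype D] [AddCommMonoid M]
    (f : A → B → C → D → M) :
    ∑ a, ∑ b, ∑ c, ∑ d, f a b c d = ∑ a, ∑ b, ∑ d, ∑ c, f a b c d :=
  Finset.sum_congr rfl fun _ _ => Finset.sum_congr rfl fun _ _ => Finset.sum_comm
end SumSwap

noncomputable def auxG {q m : ℕ} (b : Fin q → Fin q → ℝ) (a : (Fin (m+2) → Fin q) → ℝ)
    (f : Fin (m+2) → Fin q) (a0 : Fin (m+2)) : ℝ :=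
  ∑ x : Fin q, b x (f a0) * a (Function.update f a0 x)

noncomputable def auxT {q m : ℕ} (b : Fin q → Fin q → ℝ) (a : (Fin (m+2) → Fin q) → ℝ)
    (a0 b0 : Fin (m+2)) : ℝ :=
  ∑ f : Fin (m+2) → Fin q, auxG b a f a0 * auxG b a f b0

noncomputable def auxSP {q m : ℕ} (a : (Fin (m+2) → Fin q) → ℝ) (i j : Fin q) : ℝ :=
  ∑ g : Fin (m+1) → Fin q, a (Fin.cons i g) * a (Fin.cons j g)

noncomputable def auxSQ {q m : ℕ} (a : (Fin (m+2) → Fin q) → ℝ) (i j k l : Fin q) : ℝ :=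
  ∑ h : Fin m → Fin q, a (Fin.cons i (Fin.cons j h)) * a (Fin.cons k (Fin.cons l h))

variable {q m : ℕ} {b : Fin q → Fin q → ℝ} {a : (Fin (m+2) → Fin q) → ℝ}

lemma fin_zero_ne_one' : (0 : Fin (m+2)) ≠ 1 := Fin.ne_of_lt (by simp [Fin.lt_def])

lemma auxG_perm
    (ha : ∀ (σ : Equiv.Perm (Fin (m+2))) f, a (f ∘ σ) = ((Equiv.Perm.sign σ : ℤ) : ℝ) * a f)
    (σ : Equiv.Perm (Fin (m+2))) (f : Fin (m+2) → Fin q) (a0 : Fin (m+2)) :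
    auxG b a (f ∘ σ) a0 = ((Equiv.Perm.sign σ : ℤ) : ℝ) * auxG b a f (σ a0) := by
  unfold auxG
  rw [Finset.mul_sum]
  refine Finset.sum_congr rfl fun x _ => ?_
  rw [← Function.update_comp_eq_of_injective f σ.injective a0 x, ha σ]
  show b x (f (σ a0)) * _ = _
  ring

lemma auxT_perm
    (ha : ∀ (σ : Equiv.Perm (Fin (m+2))) f, a (f ∘ σ) = ((Equiv.Perm.sign σ : ℤ) : ℝ) * a f)
    (σ : Equiv.Perm (Fin (m+2))) (a0 b0 : Fin (m+2)) :
    auxT b a a0 b0 = auxT b a (σ a0) (σ b0) := by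
  have hre : auxT b a a0 b0 = ∑ f, auxG b a (f ∘ σ) a0 * auxG b a (f ∘ σ) b0 :=
    (Equiv.sum_comp (Equiv.arrowCongr σ.symm (Equiv.refl (Fin q)))
      (fun f => auxG b a f a0 * auxG b a f b0)).symm
  rw [hre]
  refine Finset.sum_congr rfl fun f _ => ?_
  rw [auxG_perm ha, auxG_perm ha]
  rcases Int.units_eq_one_or (Equiv.Perm.sign σ) with h | h <;> rw [h] <;> push_cast <;> ring

lemma auxT_diag
    (ha : ∀ (σ : Equiv.Perm (Fin (m+2))) f, a (f ∘ σ) = ((Equiv.Perm.sign σ : ℤ) : ℝ) * a f)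
    (a0 : Fin (m+2)) : auxT b a a0 a0 = auxT b a 0 0 := by
  have h := auxT_perm (b := b) ha (Equiv.swap 0 a0) 0 0
  rw [Equiv.swap_apply_left] at h
  exact h.symm

lemma auxT_off
    (ha : ∀ (σ : Equiv.Perm (Fin (m+2))) f, a (f ∘ σ) = ((Equiv.Perm.sign σ : ℤ) : ℝ) * a f)
    (a0 b0 : Fin (m+2)) (hne : a0 ≠ b0) : auxT b a a0 b0 = auxT b a 0 1 := by
  set τ := Equiv.swap (0 : Fin (m+2)) a0 with hτ
  have hc : τ b0 ≠ 0 := by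
    intro hc
    have := congrArg τ hc
    rw [Equiv.swap_apply_self, Equiv.swap_apply_left] at this
    exact hne this.symm
  set ρ := Equiv.swap (1 : Fin (m+2)) (τ b0) with hρ
  have h := auxT_perm (b := b) ha (ρ.trans τ) 0 1
  have h0 : (ρ.trans τ) 0 = a0 := by
    rw [Equiv.trans_apply, hρ, Equiv.swap_apply_of_ne_of_ne fin_zero_ne_one' (Ne.symm hc)]
    exact Equiv.swap_apply_left _ _
  have h1 : (ρ.trans τ) 1 = b0 := by
    rw [Equiv.trans_apply, hρ, Equiv.swap_apply_left, hτ, Equiv.swap_apply_self]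
  rw [h0, h1] at h
  exact h.symm

lemma sum_split {n : ℕ} (F : (Fin (n+1) → Fin q) → ℝ) :
    ∑ f : Fin (n+1) → Fin q, F f = ∑ i : Fin q, ∑ g : Fin n → Fin q, F (Fin.cons i g) := by
  rw [← (Fin.consEquiv (fun _ => Fin q)).sum_comp F, Fintype.sum_prod_type]
  rfl

lemma auxG_cons_zero (i : Fin q) (g : Fin (m+1) → Fin q) :
    auxG b a (Fin.cons i g) 0 = ∑ x, b x i * a (Fin.cons x g) := by
  unfold auxG
  refine Finset.sum_congr rfl fun x _ => ?_
  rw [Fin.update_cons_zero, Fin.cons_zero]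

lemma auxG_cons_one (i j : Fin q) (h : Fin m → Fin q) :
    auxG b a (Fin.cons i (Fin.cons j h)) 1 = ∑ x, b x j * a (Fin.cons i (Fin.cons x h)) := by
  unfold auxG
  refine Finset.sum_congr rfl fun x _ => ?_
  rw [show (1 : Fin (m+2)) = Fin.succ 0 from (Fin.succ_zero_eq_one).symm, Fin.cons_succ,
    ← Fin.cons_update, Fin.update_cons_zero, Fin.cons_zero]

lemma auxT00 : auxT b a 0 0
    = ∑ i : Fin q, ∑ g : Fin (m+1) → Fin q,
        (∑ x, b x i * a (Fin.cons x g)) * (∑ x, b x i * a (Fin.cons x g)) := by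
  unfold auxT
  rw [sum_split (fun f => auxG b a f 0 * auxG b a f 0)]
  exact Finset.sum_congr rfl fun i _ => Finset.sum_congr rfl fun g _ => by
    rw [auxG_cons_zero]

lemma auxT01 : auxT b a 0 1
    = ∑ i : Fin q, ∑ j : Fin q, ∑ h : Fin m → Fin q,
        (∑ x, b x i * a (Fin.cons x (Fin.cons j h))) *
        (∑ y, b y j * a (Fin.cons i (Fin.cons y h))) := by
  unfold auxT
  rw [sum_split (fun f => auxG b a f 0 * auxG b a f 1)]
  refine Finset.sum_congr rfl fun i _ => ?_
  rw [sum_split (fun g => auxG b a (Fin.cons i g) 0 * auxG b a (Fin.cons i g) 1)]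
  refine Finset.sum_congr rfl fun j _ => Finset.sum_congr rfl fun h _ => ?_
  rw [auxG_cons_zero, auxG_cons_one]

lemma auxT00_nonneg : 0 ≤ auxT b a 0 0 := by
  rw [auxT00]
  exact Finset.sum_nonneg fun i _ => Finset.sum_nonneg fun g _ => mul_self_nonneg _

lemma auxT00_eq (hb : ∀ i j, b i j = - b j i) :
    auxT b a 0 0 = ∑ l : Fin q, ∑ i : Fin q, ∑ j : Fin q, b l i * b l j * auxSP a i j := by
  rw [auxT00]
  refine Finset.sum_congr rfl fun i _ => ?_
  calc ∑ g : Fin (m+1) → Fin q, (∑ x, b x i * a (Fin.cons x g)) * (∑ y, b y i * a (Fin.cons y g))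
      = ∑ g : Fin (m+1) → Fin q, ∑ x, ∑ y,
          (b x i * a (Fin.cons x g)) * (b y i * a (Fin.cons y g)) :=
        Finset.sum_congr rfl fun g _ => Finset.sum_mul_sum _ _ _ _
    _ = ∑ x, ∑ g : Fin (m+1) → Fin q, ∑ y,
          (b x i * a (Fin.cons x g)) * (b y i * a (Fin.cons y g)) := sw12 _
    _ = ∑ x, ∑ y, ∑ g : Fin (m+1) → Fin q,
          (b x i * a (Fin.cons x g)) * (b y i * a (Fin.cons y g)) :=
        Finset.sum_congr rfl fun x _ => sw12 _
    _ = ∑ x : Fin q, ∑ y : Fin q, b i x * b i y * auxSP a x y := by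
        refine Finset.sum_congr rfl fun x _ => Finset.sum_congr rfl fun y _ => ?_
        rw [auxSP, Finset.mul_sum]
        exact Finset.sum_congr rfl fun g _ => by rw [hb x i, hb y i]; ring

lemma auxT01_eq :
    auxT b a 0 1 = ∑ i : Fin q, ∑ j : Fin q, ∑ k : Fin q, ∑ l : Fin q,
      b i k * b l j * auxSQ a i j k l := by
  rw [auxT01]
  have step1 : ∀ i j : Fin q,
      (∑ h : Fin m → Fin q,
        (∑ x, b x i * a (Fin.cons x (Fin.cons j h))) *
        (∑ y, b y j * a (Fin.cons i (Fin.cons y h))))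
      = ∑ x : Fin q, ∑ y : Fin q, b x i * b y j * auxSQ a x j i y := by
    intro i j
    calc ∑ h : Fin m → Fin q,
            (∑ x, b x i * a (Fin.cons x (Fin.cons j h))) *
            (∑ y, b y j * a (Fin.cons i (Fin.cons y h)))
        = ∑ h : Fin m → Fin q, ∑ x, ∑ y,
            (b x i * a (Fin.cons x (Fin.cons j h))) *
            (b y j * a (Fin.cons i (Fin.cons y h))) :=
          Finset.sum_congr rfl fun h _ => Finset.sum_mul_sum _ _ _ _
      _ = ∑ x, ∑ h : Fin m → Fin q, ∑ y,
            (b x i * a (Fin.cons x (Fin.cons j h))) *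
            (b y j * a (Fin.cons i (Fin.cons y h))) := sw12 _
      _ = ∑ x, ∑ y, ∑ h : Fin m → Fin q,
            (b x i * a (Fin.cons x (Fin.cons j h))) *
            (b y j * a (Fin.cons i (Fin.cons y h))) :=
          Finset.sum_congr rfl fun x _ => sw12 _
      _ = ∑ x : Fin q, ∑ y : Fin q, b x i * b y j * auxSQ a x j i y := by
          refine Finset.sum_congr rfl fun x _ => Finset.sum_congr rfl fun y _ => ?_
          rw [auxSQ, Finset.mul_sum]
          exact Finset.sum_congr rfl fun h _ => by ring
  calc ∑ i : Fin q, ∑ j : Fin q, (∑ h : Fin m → Fin q,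
          (∑ x, b x i * a (Fin.cons x (Fin.cons j h))) *
          (∑ y, b y j * a (Fin.cons i (Fin.cons y h))))
      = ∑ i : Fin q, ∑ j : Fin q, ∑ x : Fin q, ∑ y : Fin q,
          b x i * b y j * auxSQ a x j i y :=
        Finset.sum_congr rfl fun i _ => Finset.sum_congr rfl fun j _ => step1 i j
    _ = ∑ x : Fin q, ∑ j : Fin q, ∑ i : Fin q, ∑ y : Fin q,
          b x i * b y j * auxSQ a x j i y := by
        rw [sw23 (fun i j x => ∑ y, b x i * b y j * auxSQ a x j i y),
          sw12 (fun i x => ∑ j, ∑ y, b x i * b y j * auxSQ a x j i y),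
          sw23 (fun x i j => ∑ y, b x i * b y j * auxSQ a x j i y)]

lemma auxSQ_swap1
    (hsw : ∀ (x y : Fin q) (w : Fin m → Fin q),
      a (Fin.cons y (Fin.cons x w)) = - a (Fin.cons x (Fin.cons y w)))
    (i j k l : Fin q) : auxSQ a j i k l = - auxSQ a i j k l := by
  unfold auxSQ
  rw [← Finset.sum_neg_distrib]
  exact Finset.sum_congr rfl fun h _ => by rw [hsw i j h]; ring

lemma auxSQ_swap2
    (hsw : ∀ (x y : Fin q) (w : Fin m → Fin q),
      a (Fin.cons y (Fin.cons x w)) = - a (Fin.cons x (Fin.cons y w)))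
    (i j k l : Fin q) : auxSQ a i j l k = - auxSQ a i j k l := by
  unfold auxSQ
  rw [← Finset.sum_neg_distrib]
  exact Finset.sum_congr rfl fun h _ => by rw [hsw k l h]; ring

lemma aux_off1 (hb : ∀ i j, b i j = - b j i)
    (hsw : ∀ (x y : Fin q) (w : Fin m → Fin q),
      a (Fin.cons y (Fin.cons x w)) = - a (Fin.cons x (Fin.cons y w))) :
    (∑ i : Fin q, ∑ j : Fin q, ∑ k : Fin q, ∑ l : Fin q, b j k * b i l * auxSQ a i j k l)
      = ∑ i : Fin q, ∑ j : Fin q, ∑ k : Fin q, ∑ l : Fin q,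
          b i k * b l j * auxSQ a i j k l := by
  rw [sw12 (fun i j => ∑ k, ∑ l, b j k * b i l * auxSQ a i j k l)]
  refine Finset.sum_congr rfl fun i _ => Finset.sum_congr rfl fun j _ =>
    Finset.sum_congr rfl fun k _ => Finset.sum_congr rfl fun l _ => ?_
  rw [auxSQ_swap1 hsw, hb j l]
  ring

lemma aux_off2
    (hsw : ∀ (x y : Fin q) (w : Fin m → Fin q),
      a (Fin.cons y (Fin.cons x w)) = - a (Fin.cons x (Fin.cons y w))) :
    (∑ i : Fin q, ∑ j : Fin q, ∑ k : Fin q, ∑ l : Fin q, b k i * b j l * auxSQ a i j k l)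
      = ∑ i : Fin q, ∑ j : Fin q, ∑ k : Fin q, ∑ l : Fin q,
          b i k * b l j * auxSQ a i j k l := by
  rw [sw12 (fun i j => ∑ k, ∑ l, b k i * b j l * auxSQ a i j k l)]
  refine Finset.sum_congr rfl fun i _ => Finset.sum_congr rfl fun j _ => ?_
  rw [sw12 (fun k l => b k j * b i l * auxSQ a j i k l)]
  refine Finset.sum_congr rfl fun k _ => Finset.sum_congr rfl fun l _ => ?_
  rw [auxSQ_swap1 hsw, auxSQ_swap2 hsw]
  ring

lemma aux_Esq
    (ha : ∀ (σ : Equiv.Perm (Fin (m+2))) f, a (f ∘ σ) = ((Equiv.Perm.sign σ : ℤ) : ℝ) * a f) :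
    ∑ f : Fin (m+2) → Fin q, (∑ a0, auxG b a f a0) * (∑ a0, auxG b a f a0)
      = ((m:ℝ)+2) * auxT b a 0 0 + (((m:ℝ)+2) * ((m:ℝ)+1)) * auxT b a 0 1 := by
  calc ∑ f : Fin (m+2) → Fin q, (∑ a0, auxG b a f a0) * (∑ a0, auxG b a f a0)
      = ∑ f : Fin (m+2) → Fin q, ∑ a0, ∑ b0, auxG b a f a0 * auxG b a f b0 :=
        Finset.sum_congr rfl fun f _ => Finset.sum_mul_sum _ _ _ _
    _ = ∑ a0, ∑ f : Fin (m+2) → Fin q, ∑ b0, auxG b a f a0 * auxG b a f b0 := sw12 _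
    _ = ∑ a0, ∑ b0, ∑ f : Fin (m+2) → Fin q, auxG b a f a0 * auxG b a f b0 :=
        Finset.sum_congr rfl fun a0 _ => sw12 _
    _ = ∑ a0 : Fin (m+2), ∑ b0, auxT b a a0 b0 := rfl
    _ = ∑ a0 : Fin (m+2), (auxT b a 0 0 + ((m:ℝ)+1) * auxT b a 0 1) := by
        refine Finset.sum_congr rfl fun a0 _ => ?_
        rw [← Finset.add_sum_erase _ _ (Finset.mem_univ a0), auxT_diag ha a0]
        congr 1
        rw [Finset.sum_congr rfl
          (fun b0 hb0 => auxT_off ha a0 b0 (Ne.symm (Finset.ne_of_mem_erase hb0))),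
          Finset.sum_const, Finset.card_erase_of_mem (Finset.mem_univ a0),
          Finset.card_univ, Fintype.card_fin, nsmul_eq_mul]
        push_cast
        ring
    _ = ((m:ℝ)+2) * auxT b a 0 0 + (((m:ℝ)+2) * ((m:ℝ)+1)) * auxT b a 0 1 := by
        rw [Finset.sum_const, Finset.card_univ, Fintype.card_fin, nsmul_eq_mul]
        push_cast
        ring

lemma aux_key0 (hb : ∀ i j, b i j = - b j i)
    (ha : ∀ (σ : Equiv.Perm (Fin (m+2))) f, a (f ∘ σ) = ((Equiv.Perm.sign σ : ℤ) : ℝ) * a f)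
    (hsw : ∀ (x y : Fin q) (w : Fin m → Fin q),
      a (Fin.cons y (Fin.cons x w)) = - a (Fin.cons x (Fin.cons y w))) :
    0 ≤ ((m:ℝ) + 2) * (∑ l : Fin q, ∑ i : Fin q, ∑ j : Fin q, b l i * b l j * auxSP a i j)
      + ((m:ℝ) + 1) * ∑ i : Fin q, ∑ j : Fin q, ∑ k : Fin q, ∑ l : Fin q,
          (b j k * b i l + b k i * b j l) * auxSQ a i j k l := by
  have hsplit : (∑ i : Fin q, ∑ j : Fin q, ∑ k : Fin q, ∑ l : Fin q,
        (b j k * b i l + b k i * b j l) * auxSQ a i j k l)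
      = (∑ i : Fin q, ∑ j : Fin q, ∑ k : Fin q, ∑ l : Fin q, b j k * b i l * auxSQ a i j k l)
        + ∑ i : Fin q, ∑ j : Fin q, ∑ k : Fin q, ∑ l : Fin q,
            b k i * b j l * auxSQ a i j k l := by
    simp [add_mul, Finset.sum_add_distrib]
  rw [hsplit, aux_off1 hb hsw, aux_off2 (b := b) hsw, ← auxT01_eq (b := b), ← auxT00_eq hb]
  have hEnn : 0 ≤ ∑ f : Fin (m+2) → Fin q, (∑ a0, auxG b a f a0) * (∑ a0, auxG b a f a0) :=
    Finset.sum_nonneg fun f _ => mul_self_nonneg _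
  rw [aux_Esq ha] at hEnn
  have hT00 : 0 ≤ auxT b a 0 0 := auxT00_nonneg
  have hm : (0:ℝ) ≤ (m:ℝ) := Nat.cast_nonneg m
  have hm2 : (0:ℝ) < (m:ℝ) + 2 := by linarith
  nlinarith [hEnn, hT00, hm, hm2, mul_nonneg hm hT00]

lemma aux_sum_apply {p : ℕ} {ι : Type*} (s : Finset ι) (F : ι → AlternatingMap ℝ Q ℝ (Fin p))
    (v : Fin p → Q) : (∑ j ∈ s, F j) v = ∑ j ∈ s, F j v := by
  induction s using Finset.cons_induction with
  | empty => simp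
  | cons a s ha ih => simp [Finset.sum_cons, ih]

lemma aux_formInner_self_nonneg {q p : ℕ} (e : Fin q → Q) (β : AlternatingMap ℝ Q ℝ (Fin p)) :
    0 ≤ formInner e β β := by
  unfold formInner
  exact mul_nonneg (by positivity) (Finset.sum_nonneg fun f _ => mul_self_nonneg _)

lemma aux_iprod_sum {n : ℕ} {ι : Type*} [Fintype ι] (c : ι → ℝ) (v : ι → Q)
    (α : AlternatingMap ℝ Q ℝ (Fin (n+1))) :
    iprod (∑ j, c j • v j) α = ∑ j, c j • iprod (v j) α := by
  show α.curryLeft _ = _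
  rw [map_sum]
  refine Finset.sum_congr rfl fun j _ => ?_
  rw [map_smul]
  rfl

lemma sw12' {A B M : Type*} [Fintype A] [Fintype B] [AddCommMonoid M] (f : A → B → M) :
    ∑ a, ∑ b, f a b = ∑ b, ∑ a, f a b := Finset.sum_comm
lemma sw23' {A B C M : Type*} [Fintype A] [Fintype B] [Fintype C] [AddCommMonoid M]
    (f : A → B → C → M) :
    ∑ a, ∑ b, ∑ c, f a b c = ∑ a, ∑ c, ∑ b, f a b c :=
  Finset.sum_congr rfl fun _ _ => Finset.sum_comm
lemma aux_formInner_sum₂ {q p : ℕ} (e : Fin q → Q) {ι κ : Type*} [Fintype ι] [Fintype κ]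
    (c : ι → ℝ) (d : κ → ℝ) (β : ι → AlternatingMap ℝ Q ℝ (Fin p))
    (γ : κ → AlternatingMap ℝ Q ℝ (Fin p)) :
    formInner e (∑ j, c j • β j) (∑ k, d k • γ k)
      = ∑ j, ∑ k, c j * d k * formInner e (β j) (γ k) := by
  unfold formInner
  simp only [aux_sum_apply, AlternatingMap.smul_apply, smul_eq_mul, Finset.sum_mul_sum,
    Finset.mul_sum, Finset.sum_mul]
  rw [sw23' (fun f k j => 1 / (p.factorial:ℝ) * (c j * (β j) (e ∘ f) * (d k * (γ k) (e ∘ f)))),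
    sw12' (fun f j => ∑ k, 1 / (p.factorial:ℝ) * (c j * (β j) (e ∘ f) * (d k * (γ k) (e ∘ f))))]
  refine Finset.sum_congr rfl fun j _ => ?_
  rw [sw12' (fun f k => 1 / (p.factorial:ℝ) * (c j * (β j) (e ∘ f) * (d k * (γ k) (e ∘ f))))]
  exact Finset.sum_congr rfl fun k _ => Finset.sum_congr rfl fun f _ => by ring

lemma aux_W_nonneg {q n : ℕ} (e : Fin q → Q) (b : Fin q → Fin q → ℝ)
    (α : AlternatingMap ℝ Q ℝ (Fin (n+1))) :
    0 ≤ ∑ l : Fin q, ∑ i : Fin q, ∑ j : Fin q,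
        b l i * b l j * formInner e (iprod (e i) α) (iprod (e j) α) := by
  refine Finset.sum_nonneg fun l _ => ?_
  rw [← aux_formInner_sum₂ e (fun i => b l i) (fun j => b l j)
    (fun i => iprod (e i) α) (fun j => iprod (e j) α)]
  exact aux_formInner_self_nonneg e _

lemma aux_cons_swap {n : ℕ} {γ : Type*} (x y : γ) (h : Fin n → γ) :
    (Fin.cons x (Fin.cons y h) : Fin (n+2) → γ) ∘ (Equiv.swap 0 1) = Fin.cons y (Fin.cons x h) := by
  funext z
  refine Fin.cases ?_ (fun w => ?_) z
  · simp [Equiv.swap_apply_left]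
  · refine Fin.cases ?_ (fun u => ?_) w
    · have h1 : ((0 : Fin (n+1)).succ : Fin (n+2)) = 1 := Fin.succ_zero_eq_one
      simp [h1, Equiv.swap_apply_right]
    · have h0 : (u.succ.succ : Fin (n+2)) ≠ 0 := Fin.succ_ne_zero _
      have h1 : (u.succ.succ : Fin (n+2)) ≠ 1 := by
        rw [← Fin.succ_zero_eq_one]
        exact fun hc => Fin.succ_ne_zero u (Fin.succ_injective _ hc)
      simp [Equiv.swap_apply_of_ne_of_ne h0 h1]

lemma aux_key {q m : ℕ} (e : Fin q → Q) (b : Fin q → Fin q → ℝ)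
    (hb : ∀ i j, b i j = - b j i) (α : AlternatingMap ℝ Q ℝ (Fin (m+2))) :
    0 ≤ ((m:ℝ) + 2) * (∑ l : Fin q, ∑ i : Fin q, ∑ j : Fin q, b l i * b l j *
            formInner e (iprod (e i) α) (iprod (e j) α))
      + ∑ i : Fin q, ∑ j : Fin q, ∑ k : Fin q, ∑ l : Fin q,
          (b j k * b i l + b k i * b j l) *
            formInner e (iprod (e j) (iprod (e i) α)) (iprod (e l) (iprod (e k) α)) := by
  set a : (Fin (m+2) → Fin q) → ℝ := fun f => α (e ∘ f) with haa
  have ha : ∀ (σ : Equiv.Perm (Fin (m+2))) f, a (f ∘ σ) = ((Equiv.Perm.sign σ : ℤ) : ℝ) * a f := by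
    intro σ f
    show α (e ∘ (f ∘ σ)) = _ * α (e ∘ f)
    have hcomp : e ∘ (f ∘ σ) = (e ∘ f) ∘ σ := rfl
    rw [hcomp, α.map_perm (e ∘ f) σ, Units.smul_def, zsmul_eq_mul]
  have hsw : ∀ (x y : Fin q) (w : Fin m → Fin q),
      a (Fin.cons y (Fin.cons x w)) = - a (Fin.cons x (Fin.cons y w)) := by
    intro x y w
    have h1 := ha (Equiv.swap 0 1) (Fin.cons x (Fin.cons y w))
    rw [aux_cons_swap] at h1
    rw [h1, Equiv.Perm.sign_swap fin_zero_ne_one']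
    push_cast
    ring
  have h0 := aux_key0 hb ha hsw
  have hP : ∀ i j, formInner e (iprod (e i) α) (iprod (e j) α)
      = (1 / ((m+1).factorial : ℝ)) * auxSP a i j := by
    intro i j
    unfold formInner
    congr 1
    refine Finset.sum_congr rfl fun g _ => ?_
    have h1 : (iprod (e i) α) (e ∘ g) = a (Fin.cons i g) := by
      show α (Matrix.vecCons (e i) (e ∘ g)) = _
      rw [show Matrix.vecCons (e i) (e ∘ g) = e ∘ Fin.cons i g from (Fin.comp_cons e i g).symm]
    have h2 : (iprod (e j) α) (e ∘ g) = a (Fin.cons j g) := by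
      show α (Matrix.vecCons (e j) (e ∘ g)) = _
      rw [show Matrix.vecCons (e j) (e ∘ g) = e ∘ Fin.cons j g from (Fin.comp_cons e j g).symm]
    rw [h1, h2]
  have hQ : ∀ i j k l, formInner e (iprod (e j) (iprod (e i) α)) (iprod (e l) (iprod (e k) α))
      = (1 / (m.factorial : ℝ)) * auxSQ a i j k l := by
    intro i j k l
    unfold formInner
    congr 1
    refine Finset.sum_congr rfl fun h _ => ?_
    have h1 : (iprod (e j) (iprod (e i) α)) (e ∘ h) = a (Fin.cons i (Fin.cons j h)) := by
      show α (Matrix.vecCons (e i) (Matrix.vecCons (e j) (e ∘ h))) = _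
      rw [show Matrix.vecCons (e j) (e ∘ h) = e ∘ Fin.cons j h from (Fin.comp_cons e j h).symm,
        show Matrix.vecCons (e i) (e ∘ Fin.cons j h) = e ∘ Fin.cons i (Fin.cons j h) from
          (Fin.comp_cons e i (Fin.cons j h)).symm]
    have h2 : (iprod (e l) (iprod (e k) α)) (e ∘ h) = a (Fin.cons k (Fin.cons l h)) := by
      show α (Matrix.vecCons (e k) (Matrix.vecCons (e l) (e ∘ h))) = _
      rw [show Matrix.vecCons (e l) (e ∘ h) = e ∘ Fin.cons l h from (Fin.comp_cons e l h).symm,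
        show Matrix.vecCons (e k) (e ∘ Fin.cons l h) = e ∘ Fin.cons k (Fin.cons l h) from
          (Fin.comp_cons e k (Fin.cons l h)).symm]
    rw [h1, h2]
  simp only [hP, hQ]
  have hfact : ((m+1).factorial : ℝ) = ((m:ℝ)+1) * (m.factorial : ℝ) := by
    rw [Nat.factorial_succ]; push_cast; ring
  have hfne : (m.factorial : ℝ) ≠ 0 := Nat.cast_ne_zero.mpr (Nat.factorial_ne_zero m)
  have e1 : (∑ l : Fin q, ∑ i : Fin q, ∑ j : Fin q, b l i * b l j *
        ((1 / ((m+1).factorial : ℝ)) * auxSP a i j))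
      = (1 / ((m+1).factorial : ℝ)) *
          ∑ l : Fin q, ∑ i : Fin q, ∑ j : Fin q, b l i * b l j * auxSP a i j := by
    rw [Finset.mul_sum]
    refine Finset.sum_congr rfl fun l _ => ?_
    rw [Finset.mul_sum]
    refine Finset.sum_congr rfl fun i _ => ?_
    rw [Finset.mul_sum]
    exact Finset.sum_congr rfl fun j _ => by ring
  have e2 : (∑ i : Fin q, ∑ j : Fin q, ∑ k : Fin q, ∑ l : Fin q,
        (b j k * b i l + b k i * b j l) * ((1 / (m.factorial : ℝ)) * auxSQ a i j k l))
      = (1 / ((m+1).factorial : ℝ)) * (((m:ℝ)+1) *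
          ∑ i : Fin q, ∑ j : Fin q, ∑ k : Fin q, ∑ l : Fin q,
            (b j k * b i l + b k i * b j l) * auxSQ a i j k l) := by
    rw [← mul_assoc, Finset.mul_sum]
    refine Finset.sum_congr rfl fun i _ => ?_
    rw [Finset.mul_sum]
    refine Finset.sum_congr rfl fun j _ => ?_
    rw [Finset.mul_sum]
    refine Finset.sum_congr rfl fun k _ => ?_
    rw [Finset.mul_sum]
    refine Finset.sum_congr rfl fun l _ => ?_
    rw [hfact]
    field_simp
  rw [e1, e2]
  have hc : (0:ℝ) ≤ 1 / ((m+1).factorial : ℝ) := by positivity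
  calc (0:ℝ) ≤ (1 / ((m+1).factorial : ℝ)) *
        (((m:ℝ) + 2) * (∑ l : Fin q, ∑ i : Fin q, ∑ j : Fin q, b l i * b l j * auxSP a i j)
          + ((m:ℝ) + 1) * ∑ i : Fin q, ∑ j : Fin q, ∑ k : Fin q, ∑ l : Fin q,
              (b j k * b i l + b k i * b j l) * auxSQ a i j k l) := mul_nonneg hc h0
    _ = _ := by ring


lemma sw45 {A B C D E M : Type*} [Fintype A] [Fintype B] [Fintype C] [Fintype D] [Fintype E]
    [AddCommMonoid M] (f : A → B → C → D → E → M) :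
    ∑ a, ∑ b, ∑ c, ∑ d, ∑ x, f a b c d x = ∑ a, ∑ b, ∑ c, ∑ x, ∑ d, f a b c d x :=
  Finset.sum_congr rfl fun _ _ => Finset.sum_congr rfl fun _ _ =>
    Finset.sum_congr rfl fun _ _ => Finset.sum_comm

lemma aux_reorder4 {A B M : Type*} [Fintype A] [Fintype B] [AddCommMonoid M]
    (f : A → A → A → B → M) :
    ∑ i, ∑ j, ∑ l, ∑ s, f i j l s = ∑ s, ∑ l, ∑ i, ∑ j, f i j l s := by
  rw [sw34 (fun i j l s => f i j l s),
      sw23 (fun i j s => ∑ l, f i j l s),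
      sw12 (fun i s => ∑ j, ∑ l, f i j l s),
      sw34 (fun s i j l => f i j l s),
      sw23 (fun s i l => ∑ j, f i j l s)]

lemma aux_reorder5 {A B M : Type*} [Fintype A] [Fintype B] [AddCommMonoid M]
    (f : A → A → A → A → B → M) :
    ∑ i, ∑ j, ∑ k, ∑ l, ∑ s, f i j k l s = ∑ s, ∑ i, ∑ j, ∑ k, ∑ l, f i j k l s := by
  rw [sw45 (fun i j k l s => f i j k l s),
      sw34 (fun i j k s => ∑ l, f i j k l s),
      sw23 (fun i j s => ∑ k, ∑ l, f i j k l s),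
      sw12 (fun i s => ∑ j, ∑ k, ∑ l, f i j k l s)]

lemma aux_formInner_zero {q p : ℕ} {Q : Type*} [NormedAddCommGroup Q] [InnerProductSpace ℝ Q]
    (e : Fin q → Q) (β : AlternatingMap ℝ Q ℝ (Fin p)) : formInner e 0 β = 0 := by
  simp [formInner]

/-- Algebraic core of Proposition 4.1: writing
`⟨R(α),α⟩ = ∑_{i,j} Ric^∇_{ij}⟨e_i⌟α,e_j⌟α⟩ − (1/2)∑ R^∇_{ijkl}⟨(e_j∧e_i)⌟α,(e_l∧e_k)⌟α⟩`,
for every `p`-form `α` with `1 ≤ p ≤ q`,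
`2⟨R(α),α⟩ ≥ −((p−7)/3)∑ Ric^∇_{ij}⟨e_i⌟α,e_j⌟α⟩ + ((p−1)/3)∑ R_{lilj}⟨e_i⌟α,e_j⌟α⟩
  − ∑ R_{ijkl}⟨(e_j∧e_i)⌟α,(e_l∧e_k)⌟α⟩
  − ∑_s ( ∑_i |A_{e_i}V_s⌟α|² + 2|(∑_i A_{e_i}V_s∧e_i)⌟α|² )`. -/
theorem stmt10 {q r p : ℕ} (hp1 : 1 ≤ p) (hpq : p ≤ q)
    (e : OrthonormalBasis (Fin q) ℝ Q)
    {L : Type*} [NormedAddCommGroup L] [InnerProductSpace ℝ L]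
    (V : OrthonormalBasis (Fin r) ℝ L)
    (A : Q →ₗ[ℝ] Q →ₗ[ℝ] L) (hA : ∀ X Y : Q, A X Y = - A Y X)
    (R : Fin q → Fin q → Fin q → Fin q → ℝ)
    (hR1 : ∀ i j k l, R i j k l = - R j i k l)
    (hR2 : ∀ i j k l, R i j k l = - R i j l k)
    (hR3 : ∀ i j k l, R i j k l = R k l i j)
    (hBianchi : ∀ i j k l, R i j k l + R j k i l + R k i j l = 0)
    (α : AlternatingMap ℝ Q ℝ (Fin p)) :
    2 * ((∑ i : Fin q, ∑ j : Fin q,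
            Ricnab ⇑e R A i j * formInner ⇑e (iprod (e i) α) (iprod (e j) α))
          - (1 / 2 : ℝ) * ∑ i : Fin q, ∑ j : Fin q, ∑ k : Fin q, ∑ l : Fin q,
              Rnab ⇑e R A i j k l *
                formInner ⇑e (iprod (e j) (iprod (e i) α)) (iprod (e l) (iprod (e k) α)))
      ≥ -(((p : ℝ) - 7) / 3) *
            (∑ i : Fin q, ∑ j : Fin q,
              Ricnab ⇑e R A i j * formInner ⇑e (iprod (e i) α) (iprod (e j) α))
        + (((p : ℝ) - 1) / 3) *
            (∑ i : Fin q, ∑ j : Fin q, ∑ l : Fin q,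
              R l i l j * formInner ⇑e (iprod (e i) α) (iprod (e j) α))
        - (∑ i : Fin q, ∑ j : Fin q, ∑ k : Fin q, ∑ l : Fin q,
            R i j k l *
              formInner ⇑e (iprod (e j) (iprod (e i) α)) (iprod (e l) (iprod (e k) α)))
        - ∑ s : Fin r,
            ((∑ i : Fin q,
                formInner ⇑e
                  (iprod (∑ j : Fin q, ⟪A (e i) (e j), V s⟫ • e j) α)
                  (iprod (∑ j : Fin q, ⟪A (e i) (e j), V s⟫ • e j) α))
              + 2 * formInner ⇑e
                  (∑ i : Fin q, iprod (∑ j : Fin q, ⟪A (e i) (e j), V s⟫ • e j) (iprod (e i) α))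
                  (∑ i : Fin q, iprod (∑ j : Fin q, ⟪A (e i) (e j), V s⟫ • e j) (iprod (e i) α))) := by
  obtain ⟨n, rfl⟩ : ∃ n, p = n + 1 := ⟨p - 1, (Nat.succ_pred_eq_of_pos hp1).symm⟩
  have hPar : ∀ x y : L, ⟪x, y⟫ = ∑ s : Fin r, ⟪x, V s⟫ * ⟪y, V s⟫ := by
    intro x y
    rw [← V.sum_inner_mul_inner x y]
    exact Finset.sum_congr rfl fun s _ => by rw [real_inner_comm (V s) y]
  have hBskew : ∀ (s : Fin r) (i j : Fin q),
      ⟪A (e i) (e j), V s⟫ = - ⟪A (e j) (e i), V s⟫ := by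
    intro s i j
    rw [hA (e i) (e j), inner_neg_left]
  have hRic : ∀ i j : Fin q, Ricnab ⇑e R A i j
      = ∑ l, (R l i l j + 3 * ∑ s, ⟪A (e l) (e i), V s⟫ * ⟪A (e l) (e j), V s⟫) := by
    intro i j
    unfold Ricnab
    refine Finset.sum_congr rfl fun l _ => ?_
    rw [hA (e i) (e l), inner_neg_left, hPar (A (e l) (e i)) (A (e l) (e j))]
    ring
  have h1 : (∑ i : Fin q, ∑ j : Fin q,
        Ricnab ⇑e R A i j * formInner ⇑e (iprod (e i) α) (iprod (e j) α))
      = (∑ i : Fin q, ∑ j : Fin q, ∑ l : Fin q,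
          R l i l j * formInner ⇑e (iprod (e i) α) (iprod (e j) α))
        + 3 * ∑ s : Fin r, ∑ l : Fin q, ∑ i : Fin q, ∑ j : Fin q,
            ⟪A (e l) (e i), V s⟫ * ⟪A (e l) (e j), V s⟫ *
              formInner ⇑e (iprod (e i) α) (iprod (e j) α) := by
    calc (∑ i : Fin q, ∑ j : Fin q,
          Ricnab ⇑e R A i j * formInner ⇑e (iprod (e i) α) (iprod (e j) α))
        = ∑ i : Fin q, ∑ j : Fin q, ∑ l : Fin q,
            (R l i l j * formInner ⇑e (iprod (e i) α) (iprod (e j) α)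
              + 3 * ∑ s : Fin r, ⟪A (e l) (e i), V s⟫ * ⟪A (e l) (e j), V s⟫ *
                  formInner ⇑e (iprod (e i) α) (iprod (e j) α)) := by
          refine Finset.sum_congr rfl fun i _ => Finset.sum_congr rfl fun j _ => ?_
          rw [hRic i j, Finset.sum_mul]
          refine Finset.sum_congr rfl fun l _ => ?_
          rw [add_mul, mul_assoc, Finset.sum_mul]
      _ = (∑ i : Fin q, ∑ j : Fin q, ∑ l : Fin q,
            R l i l j * formInner ⇑e (iprod (e i) α) (iprod (e j) α))
          + ∑ i : Fin q, ∑ j : Fin q, ∑ l : Fin q,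
              (3 * ∑ s : Fin r, ⟪A (e l) (e i), V s⟫ * ⟪A (e l) (e j), V s⟫ *
                formInner ⇑e (iprod (e i) α) (iprod (e j) α)) := by
          simp only [Finset.sum_add_distrib]
      _ = _ := by
          congr 1
          rw [show (∑ i : Fin q, ∑ j : Fin q, ∑ l : Fin q,
              (3 * ∑ s : Fin r, ⟪A (e l) (e i), V s⟫ * ⟪A (e l) (e j), V s⟫ *
                formInner ⇑e (iprod (e i) α) (iprod (e j) α)))
            = 3 * ∑ i : Fin q, ∑ j : Fin q, ∑ l : Fin q, ∑ s : Fin r,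
                ⟪A (e l) (e i), V s⟫ * ⟪A (e l) (e j), V s⟫ *
                  formInner ⇑e (iprod (e i) α) (iprod (e j) α) from by
            simp only [← Finset.mul_sum]]
          rw [aux_reorder4 (fun i j l s =>
            ⟪A (e l) (e i), V s⟫ * ⟪A (e l) (e j), V s⟫ *
              formInner ⇑e (iprod (e i) α) (iprod (e j) α))]
  rcases n with _ | m
  · -- p = 1
    have hz2 : ∀ (s : Fin r) (i : Fin q),
        iprod (∑ j : Fin q, ⟪A (e i) (e j), V s⟫ • e j) (iprod (e i) α) = 0 := fun s i => rfl
    have hQL0 : ∀ i j k l : Fin q,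
        formInner ⇑e (iprod (e j) (iprod (e i) α)) (iprod (e l) (iprod (e k) α)) = 0 := by
      intro i j k l
      exact aux_formInner_zero ⇑e _
    have h3 : ∀ s : Fin r, (∑ i : Fin q, formInner ⇑e
          (iprod (∑ j : Fin q, ⟪A (e i) (e j), V s⟫ • e j) α)
          (iprod (∑ j : Fin q, ⟪A (e i) (e j), V s⟫ • e j) α))
        = ∑ l : Fin q, ∑ i : Fin q, ∑ j : Fin q,
            ⟪A (e l) (e i), V s⟫ * ⟪A (e l) (e j), V s⟫ *
              formInner ⇑e (iprod (e i) α) (iprod (e j) α) := by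
      intro s
      refine Finset.sum_congr rfl fun l _ => ?_
      have hv : iprod (∑ j : Fin q, ⟪A (e l) (e j), V s⟫ • e j) α
          = ∑ j : Fin q, ⟪A (e l) (e j), V s⟫ • iprod (e j) α :=
        aux_iprod_sum (fun j => ⟪A (e l) (e j), V s⟫) (fun j => e j) α
      rw [hv]
      exact aux_formInner_sum₂ ⇑e _ _ _ _
    have hAt2 : ∀ s : Fin r, formInner ⇑e
          (∑ i : Fin q, iprod (∑ j : Fin q, ⟪A (e i) (e j), V s⟫ • e j) (iprod (e i) α))
          (∑ i : Fin q, iprod (∑ j : Fin q, ⟪A (e i) (e j), V s⟫ • e j) (iprod (e i) α))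
        = 0 := by
      intro s
      have hz : (∑ i : Fin q,
          iprod (∑ j : Fin q, ⟪A (e i) (e j), V s⟫ • e j) (iprod (e i) α)) = 0 := by
        rw [Finset.sum_congr rfl (fun i _ => hz2 s i)]
        exact Finset.sum_const_zero
      rw [hz]
      exact aux_formInner_zero ⇑e _
    have h5 : (∑ s : Fin r, ((∑ i : Fin q, formInner ⇑e
            (iprod (∑ j : Fin q, ⟪A (e i) (e j), V s⟫ • e j) α)
            (iprod (∑ j : Fin q, ⟪A (e i) (e j), V s⟫ • e j) α))
          + 2 * formInner ⇑e
            (∑ i : Fin q, iprod (∑ j : Fin q, ⟪A (e i) (e j), V s⟫ • e j) (iprod (e i) α))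
            (∑ i : Fin q, iprod (∑ j : Fin q, ⟪A (e i) (e j), V s⟫ • e j) (iprod (e i) α))))
        = ∑ s : Fin r, ∑ l : Fin q, ∑ i : Fin q, ∑ j : Fin q,
            ⟪A (e l) (e i), V s⟫ * ⟪A (e l) (e j), V s⟫ *
              formInner ⇑e (iprod (e i) α) (iprod (e j) α) := by
      refine Finset.sum_congr rfl fun s _ => ?_
      rw [h3 s, hAt2 s]
      ring
    have hW : 0 ≤ ∑ s : Fin r, ∑ l : Fin q, ∑ i : Fin q, ∑ j : Fin q,
        ⟪A (e l) (e i), V s⟫ * ⟪A (e l) (e j), V s⟫ *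
          formInner ⇑e (iprod (e i) α) (iprod (e j) α) :=
      Finset.sum_nonneg fun s _ => aux_W_nonneg ⇑e (fun i j => ⟪A (e i) (e j), V s⟫) α
    rw [ge_iff_le, ← sub_nonneg, h1, h5]
    simp only [hQL0, mul_zero, Finset.sum_const_zero]
    refine hW.trans (le_of_eq ?_)
    push_cast
    ring
  · -- p = m + 2
    have hRnab : ∀ i j k l : Fin q, Rnab ⇑e R A i j k l
        = R i j k l + ∑ s : Fin r,
            (2 * (⟪A (e i) (e j), V s⟫ * ⟪A (e k) (e l), V s⟫)
              - ⟪A (e j) (e k), V s⟫ * ⟪A (e i) (e l), V s⟫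
              - ⟪A (e k) (e i), V s⟫ * ⟪A (e j) (e l), V s⟫) := by
      intro i j k l
      unfold Rnab
      rw [hPar (A (e i) (e j)) (A (e k) (e l)), hPar (A (e j) (e k)) (A (e i) (e l)),
        hPar (A (e k) (e i)) (A (e j) (e l)), Finset.mul_sum, add_sub_assoc, add_sub_assoc,
        ← Finset.sum_sub_distrib, ← Finset.sum_sub_distrib]
    have h2 : (∑ i : Fin q, ∑ j : Fin q, ∑ k : Fin q, ∑ l : Fin q,
          Rnab ⇑e R A i j k l *
            formInner ⇑e (iprod (e j) (iprod (e i) α)) (iprod (e l) (iprod (e k) α)))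
        = (∑ i : Fin q, ∑ j : Fin q, ∑ k : Fin q, ∑ l : Fin q,
            R i j k l *
              formInner ⇑e (iprod (e j) (iprod (e i) α)) (iprod (e l) (iprod (e k) α)))
          + ∑ s : Fin r, ∑ i : Fin q, ∑ j : Fin q, ∑ k : Fin q, ∑ l : Fin q,
              (2 * (⟪A (e i) (e j), V s⟫ * ⟪A (e k) (e l), V s⟫)
                - ⟪A (e j) (e k), V s⟫ * ⟪A (e i) (e l), V s⟫
                - ⟪A (e k) (e i), V s⟫ * ⟪A (e j) (e l), V s⟫) *
                formInner ⇑e (iprod (e j) (iprod (e i) α)) (iprod (e l) (iprod (e k) α)) := by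
      calc (∑ i : Fin q, ∑ j : Fin q, ∑ k : Fin q, ∑ l : Fin q,
            Rnab ⇑e R A i j k l *
              formInner ⇑e (iprod (e j) (iprod (e i) α)) (iprod (e l) (iprod (e k) α)))
          = ∑ i : Fin q, ∑ j : Fin q, ∑ k : Fin q, ∑ l : Fin q,
              (R i j k l *
                formInner ⇑e (iprod (e j) (iprod (e i) α)) (iprod (e l) (iprod (e k) α))
              + ∑ s : Fin r,
                (2 * (⟪A (e i) (e j), V s⟫ * ⟪A (e k) (e l), V s⟫)
                  - ⟪A (e j) (e k), V s⟫ * ⟪A (e i) (e l), V s⟫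
                  - ⟪A (e k) (e i), V s⟫ * ⟪A (e j) (e l), V s⟫) *
                  formInner ⇑e (iprod (e j) (iprod (e i) α)) (iprod (e l) (iprod (e k) α))) := by
            refine Finset.sum_congr rfl fun i _ => Finset.sum_congr rfl fun j _ =>
              Finset.sum_congr rfl fun k _ => Finset.sum_congr rfl fun l _ => ?_
            rw [hRnab i j k l, add_mul, Finset.sum_mul]
        _ = (∑ i : Fin q, ∑ j : Fin q, ∑ k : Fin q, ∑ l : Fin q,
              R i j k l *
                formInner ⇑e (iprod (e j) (iprod (e i) α)) (iprod (e l) (iprod (e k) α)))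
            + ∑ i : Fin q, ∑ j : Fin q, ∑ k : Fin q, ∑ l : Fin q, ∑ s : Fin r,
                (2 * (⟪A (e i) (e j), V s⟫ * ⟪A (e k) (e l), V s⟫)
                  - ⟪A (e j) (e k), V s⟫ * ⟪A (e i) (e l), V s⟫
                  - ⟪A (e k) (e i), V s⟫ * ⟪A (e j) (e l), V s⟫) *
                  formInner ⇑e (iprod (e j) (iprod (e i) α)) (iprod (e l) (iprod (e k) α)) := by
            simp only [Finset.sum_add_distrib]
        _ = _ := by
            congr 1
            rw [aux_reorder5 (fun i j k l s =>
              (2 * (⟪A (e i) (e j), V s⟫ * ⟪A (e k) (e l), V s⟫)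
                - ⟪A (e j) (e k), V s⟫ * ⟪A (e i) (e l), V s⟫
                - ⟪A (e k) (e i), V s⟫ * ⟪A (e j) (e l), V s⟫) *
                formInner ⇑e (iprod (e j) (iprod (e i) α)) (iprod (e l) (iprod (e k) α)))]
    have h3 : ∀ s : Fin r, (∑ i : Fin q, formInner ⇑e
          (iprod (∑ j : Fin q, ⟪A (e i) (e j), V s⟫ • e j) α)
          (iprod (∑ j : Fin q, ⟪A (e i) (e j), V s⟫ • e j) α))
        = ∑ l : Fin q, ∑ i : Fin q, ∑ j : Fin q,
            ⟪A (e l) (e i), V s⟫ * ⟪A (e l) (e j), V s⟫ *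
              formInner ⇑e (iprod (e i) α) (iprod (e j) α) := by
      intro s
      refine Finset.sum_congr rfl fun l _ => ?_
      have hv : iprod (∑ j : Fin q, ⟪A (e l) (e j), V s⟫ • e j) α
          = ∑ j : Fin q, ⟪A (e l) (e j), V s⟫ • iprod (e j) α :=
        aux_iprod_sum (fun j => ⟪A (e l) (e j), V s⟫) (fun j => e j) α
      rw [hv]
      exact aux_formInner_sum₂ ⇑e _ _ _ _
    have h4 : ∀ s : Fin r, formInner ⇑e
          (∑ i : Fin q, iprod (∑ j : Fin q, ⟪A (e i) (e j), V s⟫ • e j) (iprod (e i) α))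
          (∑ i : Fin q, iprod (∑ j : Fin q, ⟪A (e i) (e j), V s⟫ • e j) (iprod (e i) α))
        = ∑ i : Fin q, ∑ j : Fin q, ∑ k : Fin q, ∑ l : Fin q,
            ⟪A (e i) (e j), V s⟫ * ⟪A (e k) (e l), V s⟫ *
              formInner ⇑e (iprod (e j) (iprod (e i) α)) (iprod (e l) (iprod (e k) α)) := by
      intro s
      have hv : (∑ i : Fin q,
            iprod (∑ j : Fin q, ⟪A (e i) (e j), V s⟫ • e j) (iprod (e i) α))
          = ∑ x : Fin q × Fin q,
              ⟪A (e x.1) (e x.2), V s⟫ • iprod (e x.2) (iprod (e x.1) α) := by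
        rw [Fintype.sum_prod_type]
        refine Finset.sum_congr rfl fun i _ => ?_
        exact aux_iprod_sum (n := m) (fun j => ⟪A (e i) (e j), V s⟫) (fun j => e j)
          (iprod (e i) α)
      rw [hv]
      have hexp : formInner ⇑e
            (∑ x : Fin q × Fin q, ⟪A (e x.1) (e x.2), V s⟫ • iprod (e x.2) (iprod (e x.1) α))
            (∑ x : Fin q × Fin q, ⟪A (e x.1) (e x.2), V s⟫ • iprod (e x.2) (iprod (e x.1) α))
          = ∑ x : Fin q × Fin q, ∑ y : Fin q × Fin q,
              ⟪A (e x.1) (e x.2), V s⟫ * ⟪A (e y.1) (e y.2), V s⟫ *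
                formInner ⇑e (iprod (e x.2) (iprod (e x.1) α))
                  (iprod (e y.2) (iprod (e y.1) α)) :=
        aux_formInner_sum₂ ⇑e _ _ _ _
      rw [hexp, Fintype.sum_prod_type]
      refine Finset.sum_congr rfl fun i _ => Finset.sum_congr rfl fun j _ => ?_
      exact Fintype.sum_prod_type _
    have h5 : (∑ s : Fin r, ((∑ i : Fin q, formInner ⇑e
            (iprod (∑ j : Fin q, ⟪A (e i) (e j), V s⟫ • e j) α)
            (iprod (∑ j : Fin q, ⟪A (e i) (e j), V s⟫ • e j) α))
          + 2 * formInner ⇑e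
            (∑ i : Fin q, iprod (∑ j : Fin q, ⟪A (e i) (e j), V s⟫ • e j) (iprod (e i) α))
            (∑ i : Fin q, iprod (∑ j : Fin q, ⟪A (e i) (e j), V s⟫ • e j) (iprod (e i) α))))
        = (∑ s : Fin r, ∑ l : Fin q, ∑ i : Fin q, ∑ j : Fin q,
            ⟪A (e l) (e i), V s⟫ * ⟪A (e l) (e j), V s⟫ *
              formInner ⇑e (iprod (e i) α) (iprod (e j) α))
          + 2 * ∑ s : Fin r, ∑ i : Fin q, ∑ j : Fin q, ∑ k : Fin q, ∑ l : Fin q,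
              ⟪A (e i) (e j), V s⟫ * ⟪A (e k) (e l), V s⟫ *
                formInner ⇑e (iprod (e j) (iprod (e i) α)) (iprod (e l) (iprod (e k) α)) := by
      rw [Finset.sum_congr rfl (fun s _ => by rw [h3 s, h4 s]), Finset.sum_add_distrib,
        ← Finset.mul_sum]
    have hZsum : (∑ s : Fin r, ∑ i : Fin q, ∑ j : Fin q, ∑ k : Fin q, ∑ l : Fin q,
          (2 * (⟪A (e i) (e j), V s⟫ * ⟪A (e k) (e l), V s⟫)
            - ⟪A (e j) (e k), V s⟫ * ⟪A (e i) (e l), V s⟫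
            - ⟪A (e k) (e i), V s⟫ * ⟪A (e j) (e l), V s⟫) *
            formInner ⇑e (iprod (e j) (iprod (e i) α)) (iprod (e l) (iprod (e k) α)))
        = 2 * (∑ s : Fin r, ∑ i : Fin q, ∑ j : Fin q, ∑ k : Fin q, ∑ l : Fin q,
              ⟪A (e i) (e j), V s⟫ * ⟪A (e k) (e l), V s⟫ *
                formInner ⇑e (iprod (e j) (iprod (e i) α)) (iprod (e l) (iprod (e k) α)))
          - ∑ s : Fin r, ∑ i : Fin q, ∑ j : Fin q, ∑ k : Fin q, ∑ l : Fin q,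
              (⟪A (e j) (e k), V s⟫ * ⟪A (e i) (e l), V s⟫
                + ⟪A (e k) (e i), V s⟫ * ⟪A (e j) (e l), V s⟫) *
                formInner ⇑e (iprod (e j) (iprod (e i) α)) (iprod (e l) (iprod (e k) α)) := by
      rw [show (∑ s : Fin r, ∑ i : Fin q, ∑ j : Fin q, ∑ k : Fin q, ∑ l : Fin q,
          (2 * (⟪A (e i) (e j), V s⟫ * ⟪A (e k) (e l), V s⟫)
            - ⟪A (e j) (e k), V s⟫ * ⟪A (e i) (e l), V s⟫
            - ⟪A (e k) (e i), V s⟫ * ⟪A (e j) (e l), V s⟫) *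
            formInner ⇑e (iprod (e j) (iprod (e i) α)) (iprod (e l) (iprod (e k) α)))
        = ∑ s : Fin r, (2 * (∑ i : Fin q, ∑ j : Fin q, ∑ k : Fin q, ∑ l : Fin q,
              ⟪A (e i) (e j), V s⟫ * ⟪A (e k) (e l), V s⟫ *
                formInner ⇑e (iprod (e j) (iprod (e i) α)) (iprod (e l) (iprod (e k) α)))
            - ∑ i : Fin q, ∑ j : Fin q, ∑ k : Fin q, ∑ l : Fin q,
              (⟪A (e j) (e k), V s⟫ * ⟪A (e i) (e l), V s⟫
                + ⟪A (e k) (e i), V s⟫ * ⟪A (e j) (e l), V s⟫) *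
                formInner ⇑e (iprod (e j) (iprod (e i) α)) (iprod (e l) (iprod (e k) α))) from
        Finset.sum_congr rfl fun s _ => by
          rw [show (∑ i : Fin q, ∑ j : Fin q, ∑ k : Fin q, ∑ l : Fin q,
              (2 * (⟪A (e i) (e j), V s⟫ * ⟪A (e k) (e l), V s⟫)
                - ⟪A (e j) (e k), V s⟫ * ⟪A (e i) (e l), V s⟫
                - ⟪A (e k) (e i), V s⟫ * ⟪A (e j) (e l), V s⟫) *
                formInner ⇑e (iprod (e j) (iprod (e i) α)) (iprod (e l) (iprod (e k) α)))
            = ∑ i : Fin q, ∑ j : Fin q, ∑ k : Fin q, ∑ l : Fin q,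
              (2 * (⟪A (e i) (e j), V s⟫ * ⟪A (e k) (e l), V s⟫ *
                formInner ⇑e (iprod (e j) (iprod (e i) α)) (iprod (e l) (iprod (e k) α)))
              - (⟪A (e j) (e k), V s⟫ * ⟪A (e i) (e l), V s⟫
                + ⟪A (e k) (e i), V s⟫ * ⟪A (e j) (e l), V s⟫) *
                formInner ⇑e (iprod (e j) (iprod (e i) α)) (iprod (e l) (iprod (e k) α))) from
            Finset.sum_congr rfl fun i _ => Finset.sum_congr rfl fun j _ =>
              Finset.sum_congr rfl fun k _ => Finset.sum_congr rfl fun l _ => by ring]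
          simp only [Finset.sum_sub_distrib, ← Finset.mul_sum]]
      rw [Finset.sum_sub_distrib, ← Finset.mul_sum]
    have key : ∀ s : Fin r,
        0 ≤ ((m:ℝ) + 2) * (∑ l : Fin q, ∑ i : Fin q, ∑ j : Fin q,
            ⟪A (e l) (e i), V s⟫ * ⟪A (e l) (e j), V s⟫ *
              formInner ⇑e (iprod (e i) α) (iprod (e j) α))
          + ∑ i : Fin q, ∑ j : Fin q, ∑ k : Fin q, ∑ l : Fin q,
              (⟪A (e j) (e k), V s⟫ * ⟪A (e i) (e l), V s⟫
                + ⟪A (e k) (e i), V s⟫ * ⟪A (e j) (e l), V s⟫) *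
                formInner ⇑e (iprod (e j) (iprod (e i) α)) (iprod (e l) (iprod (e k) α)) :=
      fun s => aux_key ⇑e (fun i j => ⟪A (e i) (e j), V s⟫) (fun i j => hBskew s i j) α
    have hkeysum : 0 ≤ ((m:ℝ) + 2) * (∑ s : Fin r, ∑ l : Fin q, ∑ i : Fin q, ∑ j : Fin q,
            ⟪A (e l) (e i), V s⟫ * ⟪A (e l) (e j), V s⟫ *
              formInner ⇑e (iprod (e i) α) (iprod (e j) α))
          + ∑ s : Fin r, ∑ i : Fin q, ∑ j : Fin q, ∑ k : Fin q, ∑ l : Fin q,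
              (⟪A (e j) (e k), V s⟫ * ⟪A (e i) (e l), V s⟫
                + ⟪A (e k) (e i), V s⟫ * ⟪A (e j) (e l), V s⟫) *
                formInner ⇑e (iprod (e j) (iprod (e i) α)) (iprod (e l) (iprod (e k) α)) := by
      have h := Finset.sum_nonneg fun s (_ : s ∈ Finset.univ) => key s
      rwa [Finset.sum_add_distrib, ← Finset.mul_sum] at h
    rw [ge_iff_le, ← sub_nonneg, h1, h2, h5, hZsum]
    refine hkeysum.trans (le_of_eq ?_)
    push_cast
    ring
end

section
/- For every z in the unit sphere S^{2m−1} = {z ∈ ℂ^m : Σ_{k=1}^m |z_k|² = 1} and every 1 ≤ l ≤ m−2: ⟨[Y_l, W_l](z), X(z)⟩ = −2·θ_l·|z_l|²·(Σ_{s=l+1}^m θ_s²|z_s|²)·(Σ_{k=l}^m |z_k|²). -/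
open scoped BigOperators ComplexConjugate

/-- The real inner product on `ℂ^m`: `⟨v,w⟩ = Re ∑_k v_k · conj (w_k)`. -/
noncomputable def rinner {m : ℕ} (v w : Fin m → ℂ) : ℝ :=
  (∑ k : Fin m, v k * conj (w k)).re

/-- The vector field `X(z) = (iθ₁z₁,…,iθ_m z_m)` generating the flow. -/
noncomputable def sphX {m : ℕ} (θ : Fin m → ℝ) (z : Fin m → ℂ) : Fin m → ℂ :=
  fun k => Complex.I * (θ k : ℂ) * z k

/-- The vector field `Y_l` (here `l` is a 0-based index; the paper's `Y_l` for
`1 ≤ l ≤ m−1` corresponds to indices `l` with `(l:ℕ)+1 < m`): its components are `0` below `l`,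
`−(∑_{k>l}|z_k|²)·z_l` at `l`, and `|z_l|²·z_k` above `l`. -/
noncomputable def sphY {m : ℕ} (l : Fin m) (z : Fin m → ℂ) : Fin m → ℂ := fun k =>
  if (k : ℕ) < (l : ℕ) then 0
  else if k = l then
    -(((∑ j ∈ Finset.univ.filter (fun j : Fin m => (l : ℕ) < (j : ℕ)), ‖z j‖ ^ 2 : ℝ) : ℂ)) * z l
  else ((‖z l‖ ^ 2 : ℝ) : ℂ) * z k

/-- The generic vector field `W_p` (0-based index `p`; the paper's `W_p` for `1 ≤ p ≤ m−2`
corresponds to indices `p` with `(p:ℕ)+2 < m`): components `0` below `p`,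
`−(∑_{k>p}θ_k²|z_k|²)·i z_p` at `p`, and `θ_p θ_k |z_p|²·i z_k` above `p`. -/
noncomputable def sphW {m : ℕ} (θ : Fin m → ℝ) (p : Fin m) (z : Fin m → ℂ) : Fin m → ℂ := fun k =>
  if (k : ℕ) < (p : ℕ) then 0
  else if k = p then
    -(((∑ j ∈ Finset.univ.filter (fun j : Fin m => (p : ℕ) < (j : ℕ)),
        (θ j) ^ 2 * ‖z j‖ ^ 2 : ℝ) : ℂ)) * (Complex.I * z p)
  else (((θ p) * (θ k) * ‖z p‖ ^ 2 : ℝ) : ℂ) * (Complex.I * z k)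

/-- The special last vector field `W_{m−1}`, with `a` the index `m−2` and `b` the index `m−1`
(0-based): component `−θ_b|z_b|²·i z_a` at `a`, `θ_a|z_a|²·i z_b` at `b`, and `0` elsewhere. -/
noncomputable def sphWlast {m : ℕ} (θ : Fin m → ℝ) (a b : Fin m) (z : Fin m → ℂ) :
    Fin m → ℂ := fun k =>
  if k = a then -(((θ b * ‖z b‖ ^ 2 : ℝ)) : ℂ) * (Complex.I * z a)
  else if k = b then (((θ a * ‖z a‖ ^ 2 : ℝ)) : ℂ) * (Complex.I * z b)
  else 0

/-- The full family `W_p`, `1 ≤ p ≤ m−1` (0-based: `(p:ℕ)+1 < m`): the generic `W_p` for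
`p ≤ m−2` and the special `W_{m−1}` for the last index. -/
noncomputable def sphWfull {m : ℕ} (hm : 2 ≤ m) (θ : Fin m → ℝ) (p : Fin m) :
    (Fin m → ℂ) → (Fin m → ℂ) :=
  if (p : ℕ) = m - 2 then sphWlast θ ⟨m - 2, by omega⟩ ⟨m - 1, by omega⟩ else sphW θ p

/-- The Lie bracket `[U,V](z) = (DV)_z(U(z)) − (DU)_z(V(z))` of vector fields on `ℂ^m`,
`D` being the Fréchet derivative over `ℝ`. -/
noncomputable def bracket {m : ℕ} (U V : (Fin m → ℂ) → (Fin m → ℂ)) (z : Fin m → ℂ) :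
    Fin m → ℂ :=
  fderiv ℝ V z (U z) - fderiv ℝ U z (V z)

/-! Every component of `Y_l` and `W_l` has the form `z ↦ q_k(z) · a_k z_k`, where
`q_k(z) = ∑_j c_kj |z_j|²` is a real diagonal quadratic form and `a_k` a constant (`1` for `Y_l`,
`i` for `W_l`). In the bracket of two such fields the terms `q_k q'_k a_k a'_k z_k` cancel, and the
term coming from the derivative of `W_l` in the direction `Y_l` vanishes because `Re i = 0`; so
`[Y_l, W_l]_k = 2i (∑_j (c_W)_kj q^Y_j(z) |z_j|²) z_k`. Pairing with `X` turns each `i z_k` into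
`θ_k |z_k|²`, and evaluating the two coefficient matrices gives the formula. -/

open scoped RealInnerProductSpace

section QuadField

variable {ι : Type*} [Fintype ι]

noncomputable def weightedNormSq (c : ι → ι → ℝ) (z : ι → ℂ) (k : ι) : ℝ :=
  ∑ j, c k j * ‖z j‖ ^ 2

noncomputable def quadField (c : ι → ι → ℝ) (a : ι → ℂ) (z : ι → ℂ) : ι → ℂ :=
  fun k => (weightedNormSq c z k : ℂ) * (a k * z k)

theorem hasFDerivAt_weightedNormSq (c : ι → ι → ℝ) (z : ι → ℂ) (k : ι) :
    HasFDerivAt (fun z => weightedNormSq c z k)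
      (∑ j, c k j • 2 • (innerSL ℝ (z j)).comp (ContinuousLinearMap.proj j)) z :=
  HasFDerivAt.fun_sum fun j _ =>
    ((ContinuousLinearMap.proj (R := ℝ) (φ := fun _ : ι => ℂ) j).hasFDerivAt.norm_sq).const_mul
      (c k j)

theorem fderiv_quadField_apply (c : ι → ι → ℝ) (a z v : ι → ℂ) (k : ι) :
    fderiv ℝ (quadField c a) z v k
      = ((2 * ∑ j, c k j * ⟪z j, v j⟫ : ℝ) : ℂ) * (a k * z k)
        + (weightedNormSq c z k : ℂ) * (a k * v k) := by
  have hk : ∀ k, HasFDerivAt (fun z => quadField c a z k)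
      ((weightedNormSq c z k : ℂ) • a k • ContinuousLinearMap.proj k
        + (a k * z k) • Complex.ofRealCLM.comp
          (∑ j, c k j • 2 • (innerSL ℝ (z j)).comp (ContinuousLinearMap.proj j))) z := fun k =>
    (Complex.ofRealCLM.hasFDerivAt.comp z (hasFDerivAt_weightedNormSq c z k)).mul
      ((ContinuousLinearMap.proj (R := ℝ) (φ := fun _ : ι => ℂ) k).hasFDerivAt.const_mul (a k))
  rw [(hasFDerivAt_pi.2 hk).fderiv]
  simp only [ContinuousLinearMap.coe_pi', add_apply, smul_apply, ContinuousLinearMap.proj_apply,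
    smul_eq_mul, ContinuousLinearMap.comp_apply, sum_apply, coe_innerSL_apply, map_sum,
    Complex.ofRealCLM_apply]
  push_cast [Finset.mul_sum]
  ring_nf
  simp only [Finset.mul_sum, mul_assoc]

theorem inner_quadField_self (c : ι → ι → ℝ) (a z : ι → ℂ) (j : ι) :
    ⟪z j, quadField c a z j⟫ = weightedNormSq c z j * (a j).re * ‖z j‖ ^ 2 := by
  have h : quadField c a z j * conj (z j) = ((weightedNormSq c z j * ‖z j‖ ^ 2 : ℝ) : ℂ) * a j := by
    rw [quadField, Complex.ofReal_mul, ← Complex.normSq_eq_norm_sq, ← Complex.mul_conj]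
    ring
  rw [Complex.inner, h, Complex.re_ofReal_mul]
  ring

end QuadField

theorem bracket_quadField {m : ℕ} (c d : Fin m → Fin m → ℝ) (a b z : Fin m → ℂ) (k : Fin m) :
    bracket (quadField c a) (quadField d b) z k
      = (((2 * ∑ j, d k j * (weightedNormSq c z j * (a j).re * ‖z j‖ ^ 2) : ℝ) : ℂ) * b k
        - ((2 * ∑ j, c k j * (weightedNormSq d z j * (b j).re * ‖z j‖ ^ 2) : ℝ) : ℂ) * a k)
        * z k := by
  simp only [bracket, Pi.sub_apply, fderiv_quadField_apply, inner_quadField_self]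
  simp only [quadField]
  ring

theorem rinner_smul_sphX {m : ℕ} (θ : Fin m → ℝ) (μ z : Fin m → ℂ) :
    rinner (fun k => μ k * z k) (sphX θ z) = ∑ k, θ k * (μ k).im * ‖z k‖ ^ 2 := by
  rw [rinner, Complex.re_sum]
  refine Finset.sum_congr rfl fun k _ => ?_
  have h : μ k * z k * conj (sphX θ z k) = -Complex.I * μ k * ((θ k * ‖z k‖ ^ 2 : ℝ) : ℂ) := by
    rw [sphX, Complex.ofReal_mul, ← Complex.normSq_eq_norm_sq, ← Complex.mul_conj]
    simp only [map_mul, Complex.conj_I, Complex.conj_ofReal]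
    ring
  rw [h, Complex.re_mul_ofReal]
  simp only [neg_mul, Complex.neg_re, Complex.mul_re, Complex.I_re, Complex.I_im, zero_mul,
    one_mul, zero_sub, neg_neg]
  ring

section Coefficients

variable {m : ℕ}

def sphYCoeff (l : Fin m) (k j : Fin m) : ℝ :=
  if (k : ℕ) < l then 0 else if k = l then (if (l : ℕ) < j then -1 else 0)
  else if j = l then 1 else 0

def sphWCoeff (θ : Fin m → ℝ) (l : Fin m) (k j : Fin m) : ℝ :=
  if (k : ℕ) < l then 0 else if k = l then (if (l : ℕ) < j then -θ j ^ 2 else 0)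
  else if j = l then θ l * θ k else 0

theorem sum_sphYCoeff_mul (l k : Fin m) (f : Fin m → ℝ) :
    ∑ j, sphYCoeff l k j * f j
      = if (k : ℕ) < l then 0
        else if k = l then -∑ j ∈ Finset.univ.filter (fun j : Fin m => (l : ℕ) < j), f j
        else f l := by
  unfold sphYCoeff
  split_ifs <;> simp [ite_mul, ← Finset.sum_filter, Finset.sum_neg_distrib]

theorem sum_sphWCoeff_mul (θ : Fin m → ℝ) (l k : Fin m) (f : Fin m → ℝ) :
    ∑ j, sphWCoeff θ l k j * f j
      = if (k : ℕ) < l then 0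
        else if k = l then -∑ j ∈ Finset.univ.filter (fun j : Fin m => (l : ℕ) < j), θ j ^ 2 * f j
        else θ l * θ k * f l := by
  unfold sphWCoeff
  split_ifs <;> simp [ite_mul, ← Finset.sum_filter, Finset.sum_neg_distrib]

theorem sphY_eq_quadField (l : Fin m) : sphY l = quadField (sphYCoeff l) 1 := by
  funext z k
  simp only [sphY, quadField, weightedNormSq, sum_sphYCoeff_mul]
  split_ifs <;> simp_all

theorem sphW_eq_quadField (θ : Fin m → ℝ) (l : Fin m) :
    sphW θ l = quadField (sphWCoeff θ l) fun _ => Complex.I := by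
  funext z k
  simp only [sphW, quadField, weightedNormSq, sum_sphWCoeff_mul]
  split_ifs <;> simp_all

theorem weightedNormSq_sphYCoeff_self (l : Fin m) (z : Fin m → ℂ) :
    weightedNormSq (sphYCoeff l) z l
      = -∑ j ∈ Finset.univ.filter (fun j : Fin m => (l : ℕ) < j), ‖z j‖ ^ 2 := by
  simp [weightedNormSq, sum_sphYCoeff_mul]

theorem weightedNormSq_sphYCoeff_of_lt {l j : Fin m} (hj : (l : ℕ) < j) (z : Fin m → ℂ) :
    weightedNormSq (sphYCoeff l) z j = ‖z l‖ ^ 2 := by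
  simp [weightedNormSq, sum_sphYCoeff_mul, hj.not_gt, (Fin.ne_of_lt hj).symm]

end Coefficients

theorem Fin.sum_ite_lt_ite_eq {M : Type*} [AddCommMonoid M] {m : ℕ} (l : Fin m)
    (A B : Fin m → M) :
    ∑ k : Fin m, (if (k : ℕ) < l then 0 else if k = l then A k else B k)
      = A l + ∑ k ∈ Finset.univ.filter (fun k : Fin m => (l : ℕ) < k), B k := by
  have h : ∀ k : Fin m, (if (k : ℕ) < l then 0 else if k = l then A k else B k)
      = (if k = l then A k else 0) + if (l : ℕ) < k then B k else 0 := by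
    intro k
    rcases lt_trichotomy (k : ℕ) l with hk | hk | hk
    · simp [hk, Fin.ne_of_lt hk, hk.not_gt]
    · simp [Fin.ext hk]
    · simp [hk, (Fin.ne_of_lt hk).symm, hk.not_gt]
  simp only [h, Finset.sum_add_distrib, Finset.sum_ite_eq', Finset.mem_univ, if_true,
    Finset.sum_filter]

theorem Fin.filter_le_eq_insert_filter_lt {m : ℕ} (l : Fin m) :
    Finset.univ.filter (fun k : Fin m => (l : ℕ) ≤ (k : ℕ))
      = insert l (Finset.univ.filter (fun k : Fin m => (l : ℕ) < (k : ℕ))) := by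
  ext k
  simp only [Finset.mem_filter, Finset.mem_univ, true_and, Finset.mem_insert, ← Fin.val_inj]
  omega

theorem rinner_bracket_sphY_sphW {m : ℕ} (θ : Fin m → ℝ) (z : Fin m → ℂ) (l : Fin m) :
    rinner (bracket (sphY l) (sphW θ l) z) (sphX θ z)
      = ∑ k, θ k * ‖z k‖ ^ 2
          * (2 * ∑ j, sphWCoeff θ l k j * (weightedNormSq (sphYCoeff l) z j * ‖z j‖ ^ 2)) := by
  have h : bracket (sphY l) (sphW θ l) z = fun k =>
      (((2 * ∑ j, sphWCoeff θ l k j * (weightedNormSq (sphYCoeff l) z j * ‖z j‖ ^ 2) : ℝ) : ℂ)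
        * Complex.I) * z k := by
    funext k
    rw [sphY_eq_quadField, sphW_eq_quadField, bracket_quadField]
    simp
  rw [h, rinner_smul_sphX]
  simp only [Complex.im_ofReal_mul, Complex.I_im]
  exact Finset.sum_congr rfl fun k _ => by ring

/-- For `z` on the unit sphere and `1 ≤ l ≤ m−2` (0-based: `(l:ℕ)+2 < m`),
`⟨[Y_l, W_l](z), X(z)⟩ = −2θ_l|z_l|²(∑_{s>l}θ_s²|z_s|²)(∑_{k≥l}|z_k|²)`. -/
theorem stmt13 {m : ℕ} (θ : Fin m → ℝ) (z : Fin m → ℂ) (l : Fin m) :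
    rinner (bracket (sphY l) (sphW θ l) z) (sphX θ z)
      = -2 * θ l * ‖z l‖ ^ 2
          * (∑ s ∈ Finset.univ.filter (fun s : Fin m => (l : ℕ) < (s : ℕ)),
              (θ s) ^ 2 * ‖z s‖ ^ 2)
          * (∑ k ∈ Finset.univ.filter (fun k : Fin m => (l : ℕ) ≤ (k : ℕ)), ‖z k‖ ^ 2) := by
  rw [rinner_bracket_sphY_sphW]
  simp only [sum_sphWCoeff_mul, mul_ite, mul_zero]
  rw [Fin.sum_ite_lt_ite_eq]
  rw [Fin.filter_le_eq_insert_filter_lt, Finset.sum_insert (by simp),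
    weightedNormSq_sphYCoeff_self, Finset.sum_congr rfl fun j hj => by
      rw [weightedNormSq_sphYCoeff_of_lt (Finset.mem_filter.1 hj).2]]
  set G := Finset.univ.filter (fun s : Fin m => (l : ℕ) < (s : ℕ))
  have hl_term : ∑ j ∈ G, θ j ^ 2 * (‖z l‖ ^ 2 * ‖z j‖ ^ 2)
      = ‖z l‖ ^ 2 * ∑ j ∈ G, θ j ^ 2 * ‖z j‖ ^ 2 := by
    rw [Finset.mul_sum]
    exact Finset.sum_congr rfl fun j _ => by ring
  have hG_terms :
      ∑ k ∈ G, θ k * ‖z k‖ ^ 2 * (2 * (θ l * θ k * ((-∑ j ∈ G, ‖z j‖ ^ 2) * ‖z l‖ ^ 2)))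
      = -2 * θ l * ‖z l‖ ^ 2 * (∑ j ∈ G, ‖z j‖ ^ 2) * ∑ k ∈ G, θ k ^ 2 * ‖z k‖ ^ 2 := by
    rw [Finset.mul_sum]
    exact Finset.sum_congr rfl fun k _ => by ring
  rw [hl_term, hG_terms]
  ring
end

section
/- For every z in the unit sphere S^{2m−1} ⊂ ℂ^m and all indices with 1 ≤ p < l ≤ m−1 and p ≤ m−2: ⟨[Y_l, W_p](z), X(z)⟩ = 2·|z_l|²·θ_p·|z_p|²·Σ_{k=l+1}^m (θ_l² − θ_k²)·|z_k|². -/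
open scoped BigOperators ComplexConjugate

/-!
Both `Y_l` and `W_p` are diagonal fields `x ↦ (c · (A ρ(x))_k · x_k)_k`, with `ρ(x) = (|x_j|²)_j`,
a real matrix `A`, and `c = 1`, resp. `c = i`. In the bracket of two such fields the terms
without derivatives of the coefficients cancel, and the coefficients of `Y_l` are constant along
`W_p`, which only rotates each coordinate. So `[Y_l, W_p]_k = i (B Dρ(Y_l))_k z_k`, where `B` is
the matrix of `W_p`, and pairing with `X` gives `∑_k θ_k |z_k|² (B Dρ(Y_l))_k`. Since `p < l`,
`Y_l` does not move `|z_p|²`, and only the `k = p` row of `B` contributes.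
-/

open Matrix

section

variable {m : ℕ}

noncomputable def normSqs (x : Fin m → ℂ) : Fin m → ℝ := fun j => ‖x j‖ ^ 2

noncomputable def diagField (c : ℂ) (A : Matrix (Fin m) (Fin m) ℝ) (x : Fin m → ℂ) :
    Fin m → ℂ :=
  fun k => c * ((A *ᵥ normSqs x) k : ℂ) * x k

lemma hasFDerivAt_mulVec_normSqs_apply (A : Matrix (Fin m) (Fin m) ℝ) (z : Fin m → ℂ)
    (k : Fin m) :
    HasFDerivAt (fun x => (A *ᵥ normSqs x) k)
      (∑ j, A k j • 2 • (innerSL ℝ (z j)).comp (ContinuousLinearMap.proj j)) z := by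
  simp only [mulVec, dotProduct, normSqs]
  exact HasFDerivAt.fun_sum fun j _ => ((hasFDerivAt_apply j z).norm_sq).const_mul (A k j)

lemma fderiv_diagField (c : ℂ) (A : Matrix (Fin m) (Fin m) ℝ) (z u : Fin m → ℂ) :
    fderiv ℝ (diagField c A) z u = fun k =>
      c * ((A *ᵥ fun j => 2 * inner ℝ (z j) (u j)) k : ℂ) * z k
        + c * ((A *ᵥ normSqs z) k : ℂ) * u k := by
  have h : HasFDerivAt (diagField c A) _ z := hasFDerivAt_pi.2 fun k =>
    ((Complex.ofRealCLM.hasFDerivAt.comp z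
      (hasFDerivAt_mulVec_normSqs_apply A z k)).const_mul c).mul (hasFDerivAt_apply k z)
  rw [h.fderiv]
  ext k
  simp only [ContinuousLinearMap.pi_apply, _root_.add_apply, _root_.smul_apply, _root_.sum_apply,
    ContinuousLinearMap.comp_apply, ContinuousLinearMap.proj_apply, Complex.ofRealCLM_apply,
    coe_innerSL_apply, Function.comp_apply, smul_eq_mul, nsmul_eq_mul, mulVec, dotProduct,
    Complex.ofReal_sum, Finset.mul_sum, Finset.sum_mul]
  push_cast
  rw [add_comm]
  exact congrArg (· + _) (Finset.sum_congr rfl fun j _ => by ring)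

lemma inner_diagField (c : ℂ) (A : Matrix (Fin m) (Fin m) ℝ) (z : Fin m → ℂ) (j : Fin m) :
    inner ℝ (z j) (diagField c A z j) = c.re * (A *ᵥ normSqs z) j * normSqs z j := by
  rw [Complex.inner, diagField, mul_assoc, mul_assoc, Complex.mul_conj', ← Complex.ofReal_pow,
    ← Complex.ofReal_mul, Complex.re_mul_ofReal, normSqs, mul_assoc]

lemma bracket_diagField (c d : ℂ) (A B : Matrix (Fin m) (Fin m) ℝ) (z : Fin m → ℂ) :
    bracket (diagField c A) (diagField d B) z = fun k =>
      (d * ((B *ᵥ fun j => 2 * inner ℝ (z j) (diagField c A z j)) k : ℂ)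
        - c * ((A *ᵥ fun j => 2 * inner ℝ (z j) (diagField d B z j)) k : ℂ)) * z k := by
  ext k
  simp only [bracket, fderiv_diagField, Pi.sub_apply, diagField]
  ring

lemma bracket_diagField_one_I (A B : Matrix (Fin m) (Fin m) ℝ) (z : Fin m → ℂ) :
    bracket (diagField 1 A) (diagField Complex.I B) z = fun k =>
      Complex.I * ((B *ᵥ fun j => 2 * (A *ᵥ normSqs z) j * normSqs z j) k : ℂ) * z k := by
  rw [bracket_diagField]
  simp only [inner_diagField, Complex.one_re, Complex.I_re, zero_mul, mul_zero, one_mul]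
  ext k
  simp [← Pi.zero_def, mul_assoc]

lemma rinner_I_mul_sphX (r θ : Fin m → ℝ) (z : Fin m → ℂ) :
    rinner (fun k => Complex.I * r k * z k) (sphX θ z) = ∑ k, θ k * r k * ‖z k‖ ^ 2 := by
  simp only [rinner, sphX, Complex.re_sum]
  refine Finset.sum_congr rfl fun k _ => ?_
  have h : Complex.I * r k * z k * conj (Complex.I * θ k * z k)
      = (θ k * r k * ‖z k‖ ^ 2 : ℝ) := by
    rw [map_mul, map_mul, Complex.conj_I, Complex.conj_ofReal]
    push_cast
    linear_combination (-(θ k : ℂ) * r k * (z k * (starRingEnd ℂ) (z k))) * Complex.I_sq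
      + θ k * r k * Complex.mul_conj' (z k)
  rw [h, Complex.ofReal_re]

noncomputable def pivotMatrix (l : Fin m) (a b : Fin m → ℝ) : Matrix (Fin m) (Fin m) ℝ :=
  fun k j => if (k : ℕ) < l then 0 else if k = l then (if (l : ℕ) < j then -a j else 0)
    else if j = l then b k else 0

lemma pivotMatrix_mulVec (l : Fin m) (a b x : Fin m → ℝ) (k : Fin m) :
    (pivotMatrix l a b *ᵥ x) k = if (k : ℕ) < l then 0 else if k = l then
      -∑ j ∈ Finset.univ.filter (fun j : Fin m => (l : ℕ) < j), a j * x j else b k * x l := by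
  simp only [mulVec, dotProduct, pivotMatrix]
  split_ifs with _ hkl
  · simp
  · subst hkl
    rw [Finset.sum_filter, ← Finset.sum_neg_distrib]
    exact Finset.sum_congr rfl fun j _ => by split_ifs <;> simp_all
  · simp

lemma sphY_eq_diagField (l : Fin m) : sphY l = diagField 1 (pivotMatrix l 1 1) := by
  ext x k
  simp only [sphY, diagField, pivotMatrix_mulVec, normSqs]
  split_ifs <;> simp_all

lemma sphW_eq_diagField (θ : Fin m → ℝ) (p : Fin m) :
    sphW θ p = diagField Complex.I (pivotMatrix p (fun j => θ j ^ 2) fun k => θ p * θ k) := by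
  ext x k
  simp only [sphW, diagField, pivotMatrix_mulVec, normSqs]
  split_ifs with _ hkp
  · simp
  · subst hkp
    push_cast
    ring
  · push_cast
    ring

lemma sum_filter_lt_eq_add_sum_filter_lt {p l : Fin m} (hpl : p < l) (f : Fin m → ℝ)
    (hf : ∀ j : Fin m, (j : ℕ) < l → f j = 0) :
    ∑ j ∈ Finset.univ.filter (fun j : Fin m => (p : ℕ) < j), f j
      = f l + ∑ j ∈ Finset.univ.filter (fun j : Fin m => (l : ℕ) < j), f j := by
  have hpl' : (p : ℕ) < l := hpl
  calc ∑ j ∈ Finset.univ.filter (fun j : Fin m => (p : ℕ) < j), f j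
      = ∑ j, ((if j = l then f j else 0) + if (l : ℕ) < j then f j else 0) := by
        rw [Finset.sum_filter]
        refine Finset.sum_congr rfl fun j _ => ?_
        rcases lt_trichotomy (j : ℕ) l with h | h | h
        · simp [hf j h, Fin.ne_of_lt h, h.not_gt]
        · obtain rfl : j = l := Fin.ext h
          simp [hpl']
        · simp [(Fin.ne_of_lt h).symm, h, hpl'.trans h]
    _ = f l + ∑ j ∈ Finset.univ.filter (fun j : Fin m => (l : ℕ) < j), f j := by
        rw [Finset.sum_add_distrib, Finset.sum_ite_eq', Finset.sum_filter]
        simp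

lemma pivotMatrix_mulVec_pivotMatrix {p l : Fin m} (hpl : p < l) (a b x : Fin m → ℝ) :
    (pivotMatrix p a b *ᵥ fun j => 2 * (pivotMatrix l 1 1 *ᵥ x) j * x j)
      = Pi.single p (2 * x l * ∑ k ∈ Finset.univ.filter (fun k : Fin m => (l : ℕ) < k),
          (a l - a k) * x k) := by
  have hpl' : (p : ℕ) < l := hpl
  set v : Fin m → ℝ := fun j => 2 * (pivotMatrix l 1 1 *ᵥ x) j * x j
  have hv : ∀ j : Fin m, (j : ℕ) < l → v j = 0 := fun j h => by
    simp only [v, pivotMatrix_mulVec, if_pos h, mul_zero, zero_mul]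
  have hvl : v l
      = -(2 * (∑ j ∈ Finset.univ.filter (fun j : Fin m => (l : ℕ) < j), x j) * x l) := by
    simp [v, pivotMatrix_mulVec]
  have hvgt : ∀ j ∈ Finset.univ.filter (fun j : Fin m => (l : ℕ) < j), v j = 2 * x l * x j :=
    fun j hj => by
      have hlj : l < j := (Finset.mem_filter.1 hj).2
      simp [v, pivotMatrix_mulVec, hlj.not_gt, hlj.ne']
  ext k
  rw [pivotMatrix_mulVec, Pi.single_apply]
  split_ifs with hk hkp hkp
  · exact absurd hkp (Fin.ne_of_lt hk)
  · rfl
  · rw [sum_filter_lt_eq_add_sum_filter_lt hpl _ fun j h => by rw [hv j h, mul_zero], hvl,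
      Finset.sum_congr rfl fun j hj => congrArg (a j * ·) (hvgt j hj)]
    rw [Finset.sum_congr rfl fun j _ => mul_left_comm (a j) (2 * x l) (x j), ← Finset.mul_sum]
    simp only [sub_mul, Finset.sum_sub_distrib, mul_assoc, ← Finset.mul_sum]
    ring
  · rw [hv p hpl', mul_zero]

end

/-- For `z` on the unit sphere and `1 ≤ p < l ≤ m−1` with `p ≤ m−2`
(0-based: `p < l`, `(l:ℕ)+1 < m`, `(p:ℕ)+2 < m`),
`⟨[Y_l, W_p](z), X(z)⟩ = 2|z_l|²θ_p|z_p|²∑_{k>l}(θ_l²−θ_k²)|z_k|²`. -/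
theorem stmt14 {m : ℕ} (θ : Fin m → ℝ) (z : Fin m → ℂ)
    (p l : Fin m) (hpl : p < l) :
    rinner (bracket (sphY l) (sphW θ p) z) (sphX θ z)
      = 2 * ‖z l‖ ^ 2 * θ p * ‖z p‖ ^ 2
          * (∑ k ∈ Finset.univ.filter (fun k : Fin m => (l : ℕ) < (k : ℕ)),
              ((θ l) ^ 2 - (θ k) ^ 2) * ‖z k‖ ^ 2) := by
  rw [sphY_eq_diagField, sphW_eq_diagField, bracket_diagField_one_I, rinner_I_mul_sphX,
    pivotMatrix_mulVec_pivotMatrix hpl,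
    Fintype.sum_eq_single p fun k hk => by rw [Pi.single_eq_of_ne hk, mul_zero, zero_mul],
    Pi.single_eq_same]
  simp only [normSqs]
  ring
end

section
/- For every z in the unit sphere S^{2m−1} ⊂ ℂ^m: ⟨[Y_{m−1}, W_{m−1}](z), X(z)⟩ = −2·|z_{m−1}|²·|z_m|²·θ_{m−1}·θ_m·(|z_{m−1}|² + |z_m|²). -/
open scoped BigOperators ComplexConjugate

/-! Both `Y_{m−1}` and `W_{m−1}` are supported on the last two coordinates `a, b` and have the
shape `w ↦ (α |w_b|² w_a, β |w_a|² w_b)`. For two such fields the Lie bracket is again supported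
on `a, b`, namely `2 |z_a|² |z_b|² ((γ Re β − α Re δ) z_a, (δ Re α − β Re γ) z_b)`; for
`(α, β) = (−1, 1)` and `(γ, δ) = (−iθ_b, iθ_a)` this is `−2 |z_a|² |z_b|² (iθ_b z_a, iθ_a z_b)`,
and pairing with `X` gives the formula. -/

section PairField

open ContinuousLinearMap

variable {ι : Type*}

theorem exists_hasFDerivAt_norm_sq_mul_apply [Fintype ι] (i k : ι) (z : ι → ℂ) :
    ∃ L : (ι → ℂ) →L[ℝ] ℂ, HasFDerivAt (fun w : ι → ℂ => (‖w i‖ : ℂ) ^ 2 * w k) L z ∧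
      ∀ v, L v = ‖z i‖ ^ 2 * v k + (2 * (v i * conj (z i)).re : ℝ) * z k := by
  have hi : HasFDerivAt (fun w : ι → ℂ => w i) (proj (R := ℝ) i) z := hasFDerivAt_apply i z
  have hconj : HasFDerivAt (fun w : ι → ℂ => conj (w i))
      (Complex.conjCLE.toContinuousLinearMap.comp (proj (R := ℝ) i)) z :=
    Complex.conjCLE.toContinuousLinearMap.hasFDerivAt.comp z hi
  refine ⟨_, (hi.mul hconj).mul (hasFDerivAt_apply k z) |>.congr_of_eventuallyEq ?_, fun v => ?_⟩
  · exact Filter.Eventually.of_forall fun w => by simp [Complex.mul_conj']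
  · have : v i * conj (z i) + z i * conj (v i) = (2 * (v i * conj (z i)).re : ℝ) := by
      rw [← Complex.add_conj, map_mul, Complex.conj_conj, mul_comm (conj (v i))]
    simp only [add_apply, smul_apply, Pi.mul_apply, comp_apply, proj_apply, smul_eq_mul,
      ContinuousLinearEquiv.coe_coe, Complex.conjCLE_apply, ← Complex.mul_conj']
    linear_combination z k * this

variable [DecidableEq ι]

noncomputable def pairVec (a b : ι) (x y : ℂ) : ι → ℂ :=
  fun k => if k = a then x else if k = b then y else 0

noncomputable def pairField (a b : ι) (α β : ℂ) (w : ι → ℂ) : ι → ℂ :=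
  pairVec a b (α * (‖w b‖ ^ 2 * w a)) (β * (‖w a‖ ^ 2 * w b))

theorem pairVec_apply_left (a b : ι) (x y : ℂ) : pairVec a b x y a = x := if_pos rfl

theorem pairVec_apply_right {a b : ι} (hab : a ≠ b) (x y : ℂ) : pairVec a b x y b = y := by
  simp [pairVec, hab.symm]

theorem pairVec_sub (a b : ι) (x y x' y' : ℂ) :
    pairVec a b x y - pairVec a b x' y' = pairVec a b (x - x') (y - y') := by
  ext k
  simp only [pairVec, Pi.sub_apply]
  split_ifs <;> simp

variable [Fintype ι]

theorem hasFDerivAt_pairVec {f g : (ι → ℂ) → ℂ} {f' g' : (ι → ℂ) →L[ℝ] ℂ} {z : ι → ℂ}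
    (hf : HasFDerivAt f f' z) (hg : HasFDerivAt g g' z) (a b : ι) :
    HasFDerivAt (fun w => pairVec a b (f w) (g w))
      (pi fun k => if k = a then f' else if k = b then g' else 0) z := by
  refine hasFDerivAt_pi.2 fun k => ?_
  unfold pairVec
  split_ifs
  exacts [hf, hg, hasFDerivAt_const 0 z]

theorem fderiv_pairField_apply (a b : ι) (α β : ℂ) (z v : ι → ℂ) :
    fderiv ℝ (pairField a b α β) z v = pairVec a b
      (α * (‖z b‖ ^ 2 * v a + (2 * (v b * conj (z b)).re : ℝ) * z a))
      (β * (‖z a‖ ^ 2 * v b + (2 * (v a * conj (z a)).re : ℝ) * z b)) := by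
  obtain ⟨La, hLa, hLa_apply⟩ := exists_hasFDerivAt_norm_sq_mul_apply b a z
  obtain ⟨Lb, hLb, hLb_apply⟩ := exists_hasFDerivAt_norm_sq_mul_apply a b z
  have h := hasFDerivAt_pairVec (hLa.const_mul α) (hLb.const_mul β) a b
  unfold pairField
  rw [h.fderiv]
  ext k
  simp only [pairVec, pi_apply]
  split_ifs <;> simp [hLa_apply, hLb_apply]

end PairField

theorem bracket_pairField {m : ℕ} {a b : Fin m} (hab : a ≠ b) (α β γ δ : ℂ) (z : Fin m → ℂ) :
    bracket (pairField a b α β) (pairField a b γ δ) z = pairVec a b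
      (2 * ‖z a‖ ^ 2 * ‖z b‖ ^ 2 * (γ * β.re - α * δ.re) * z a)
      (2 * ‖z a‖ ^ 2 * ‖z b‖ ^ 2 * (δ * α.re - β * γ.re) * z b) := by
  rw [bracket, fderiv_pairField_apply, fderiv_pairField_apply, pairVec_sub]
  have re_mul_norm_sq (c u w : ℂ) :
      (c * (‖u‖ ^ 2 * w) * conj w).re = c.re * ‖u‖ ^ 2 * ‖w‖ ^ 2 := by
    rw [mul_assoc, mul_assoc, Complex.mul_conj', ← mul_pow, ← Complex.ofReal_mul,
      ← Complex.ofReal_pow, Complex.re_mul_ofReal, mul_pow, mul_assoc]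
  simp only [pairField, pairVec_apply_left, pairVec_apply_right hab, re_mul_norm_sq]
  congr 1 <;> push_cast <;> ring

theorem rinner_pairVec {m : ℕ} {a b : Fin m} (hab : a ≠ b) (x y : ℂ) (w : Fin m → ℂ) :
    rinner (pairVec a b x y) w = (x * conj (w a) + y * conj (w b)).re := by
  rw [rinner, ← Finset.sum_subset (Finset.subset_univ {a, b}), Finset.sum_pair hab,
    pairVec_apply_left, pairVec_apply_right hab]
  intro k _ hk
  simp only [Finset.mem_insert, Finset.mem_singleton, not_or] at hk
  simp [pairVec, hk.1, hk.2]

theorem sphY_eq_pairField {m : ℕ} {a b : Fin m} (hb : ∀ j : Fin m, (a : ℕ) < j ↔ j = b) :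
    sphY a = pairField a b (-1) 1 := by
  have habove : Finset.univ.filter (fun j : Fin m => (a : ℕ) < j) = {b} := by
    ext j
    simp [hb]
  funext w k
  rcases eq_or_ne k a with rfl | hka
  · simp only [sphY, pairField, pairVec, habove, Finset.sum_singleton, lt_irrefl, if_true]
    push_cast; ring
  have hkb_iff : k = b ↔ ¬(k : ℕ) < a := by
    rw [← hb, not_lt, le_iff_lt_or_eq, Fin.val_eq_val, or_iff_left hka.symm]
  simp only [sphY, pairField, pairVec, hka, if_false, hkb_iff]
  split_ifs with hlt
  · rfl
  · rw [hkb_iff.2 hlt]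
    push_cast
    ring

theorem sphWlast_eq_pairField {m : ℕ} (θ : Fin m → ℝ) (a b : Fin m) :
    sphWlast θ a b = pairField a b (-θ b * Complex.I) (θ a * Complex.I) := by
  funext w k
  simp only [sphWlast, pairField, pairVec]
  split_ifs <;> push_cast <;> ring

/-- For `z` on the unit sphere,
`⟨[Y_{m−1}, W_{m−1}](z), X(z)⟩ = −2|z_{m−1}|²|z_m|²θ_{m−1}θ_m(|z_{m−1}|²+|z_m|²)`
(0-based: `a = m−2`, `b = m−1`). -/
theorem stmt15 {m : ℕ} (hm : 2 ≤ m) (θ : Fin m → ℝ) (z : Fin m → ℂ) :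
    rinner
        (bracket (sphY ⟨m - 2, by omega⟩)
          (sphWlast θ ⟨m - 2, by omega⟩ ⟨m - 1, by omega⟩) z)
        (sphX θ z)
      = -2 * ‖z ⟨m - 2, by omega⟩‖ ^ 2 * ‖z ⟨m - 1, by omega⟩‖ ^ 2
          * θ ⟨m - 2, by omega⟩ * θ ⟨m - 1, by omega⟩
          * (‖z ⟨m - 2, by omega⟩‖ ^ 2 + ‖z ⟨m - 1, by omega⟩‖ ^ 2) := by
  set a : Fin m := ⟨m - 2, by omega⟩
  set b : Fin m := ⟨m - 1, by omega⟩
  have hab : a ≠ b := Fin.ne_of_val_ne (by simp [a, b]; omega)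
  have hb : ∀ j : Fin m, (a : ℕ) < j ↔ j = b := fun j => by
    rw [Fin.ext_iff]; have := j.isLt; simp [a, b]; omega
  rw [sphY_eq_pairField hb, sphWlast_eq_pairField, bracket_pairField hab, rinner_pairVec hab]
  have hre : (1 : ℂ).re = 1 ∧ (-1 : ℂ).re = -1 ∧ ((θ a : ℂ) * Complex.I).re = 0 ∧
      (-(θ b : ℂ) * Complex.I).re = 0 := by simp
  obtain ⟨h1, hm1, hIa, hIb⟩ := hre
  conv_rhs => rw [← Complex.ofReal_re
    (-2 * ‖z a‖ ^ 2 * ‖z b‖ ^ 2 * θ a * θ b * (‖z a‖ ^ 2 + ‖z b‖ ^ 2))]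
  simp only [sphX, h1, hm1, hIa, hIb, map_mul, Complex.conj_I, Complex.conj_ofReal]
  congr 1
  push_cast
  linear_combination (2 * ‖z a‖ ^ 2 * ‖z b‖ ^ 2 * θ a * θ b : ℂ) *
    ((z a * conj (z a) + z b * conj (z b)) * Complex.I_sq
      - Complex.mul_conj' (z a) - Complex.mul_conj' (z b))
end
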